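/- arXiv:1606.08016 — 7 statements merged into one kernel-verified Lean document; each statement's English description precedes it below -/
import Mathlib

section
/- Let (c_n)_{n≥0} be a sequence of nonnegative real numbers with c_0 = 1 such that for every δ > 0 the series Σ_{n≥0} c_n e^{-nδ} and Σ_{n≥0} n c_n e^{-nδ} converge, and suppose Σ_{n≥0} c_n = ∞. Define G(δ) := (Σ_{n≥0} n c_n e^{-nδ}) / (Σ_{n≥0} c_n e^{-nδ}). Then G(δ) → +∞ as δ → 0⁺ and G(δ) → 0 as δ → +∞; consequently for every integer n ≥ 1 there exists a unique δ_n > 0 with G(δ_n) = n, and δ_n → 0 as n → ∞. -/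
open Real Filter Topology

noncomputable def auxF (c : ℕ → ℝ) (δ : ℝ) : ℝ := ∑' n : ℕ, c n * Real.exp (-(n : ℝ) * δ)
noncomputable def auxH (c : ℕ → ℝ) (δ : ℝ) : ℝ := ∑' n : ℕ, (n : ℝ) * c n * Real.exp (-(n : ℝ) * δ)
noncomputable def auxG (c : ℕ → ℝ) (δ : ℝ) : ℝ := auxH c δ / auxF c δ

section aux
variable {c : ℕ → ℝ}

lemma aux_F_ge_one (hc : ∀ n, 0 ≤ c n) (hc0 : c 0 = 1) {δ : ℝ}
    (hs : Summable fun n : ℕ => c n * Real.exp (-(n : ℝ) * δ)) : 1 ≤ auxF c δ := by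
  have h := Summable.le_tsum hs 0 fun j _ => mul_nonneg (hc j) (Real.exp_pos _).le
  calc (1:ℝ) = c 0 * Real.exp (-((0:ℕ):ℝ) * δ) := by simp [hc0]
    _ ≤ auxF c δ := h

lemma aux_H_nonneg (hc : ∀ n, 0 ≤ c n) (δ : ℝ) : 0 ≤ auxH c δ :=
  tsum_nonneg fun n => mul_nonneg (mul_nonneg n.cast_nonneg (hc n)) (Real.exp_pos _).le

lemma aux_F_top (hc : ∀ n, 0 ≤ c n)
    (hsum : ∀ δ : ℝ, 0 < δ → Summable fun n : ℕ => c n * Real.exp (-(n : ℝ) * δ))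
    (hdiv : ¬ Summable c) :
    Tendsto (auxF c) (𝓝[>] (0:ℝ)) atTop := by
  rw [tendsto_atTop]
  intro B
  obtain ⟨K, hK⟩ := (((not_summable_iff_tendsto_nat_atTop_of_nonneg hc).mp
    hdiv).eventually_ge_atTop (2 * max B 1)).exists
  have hr : 0 < Real.log 2 / ((K : ℝ) + 1) := div_pos (Real.log_pos one_lt_two) (by positivity)
  filter_upwards [Ioo_mem_nhdsGT_of_mem
    (show (0:ℝ) ∈ Set.Ico 0 (Real.log 2 / ((K:ℝ)+1)) from ⟨le_refl _, hr⟩)] with δ hδ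
  obtain ⟨hδ0, hδr⟩ := hδ
  have hKδ : ((K:ℝ)+1) * δ < Real.log 2 := by
    have := (lt_div_iff₀ (show (0:ℝ) < (K:ℝ)+1 by positivity)).mp hδr
    linarith
  have hexp : (1:ℝ)/2 ≤ Real.exp (-((K:ℝ)+1) * δ) := by
    have h2 : Real.exp (((K:ℝ)+1) * δ) < 2 := by
      calc Real.exp (((K:ℝ)+1) * δ) < Real.exp (Real.log 2) := Real.exp_lt_exp.mpr hKδ
        _ = 2 := Real.exp_log (by norm_num)
    rw [show -((K:ℝ)+1) * δ = -(((K:ℝ)+1) * δ) by ring, Real.exp_neg, inv_eq_one_div,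
      div_le_div_iff₀ (by norm_num) (Real.exp_pos _)]
    nlinarith [Real.exp_pos (((K:ℝ)+1) * δ)]
  have hterm : ∀ i ∈ Finset.range K, c i * Real.exp (-((K:ℝ)+1) * δ) ≤ c i * Real.exp (-(i:ℝ) * δ) := by
    intro i hi
    apply mul_le_mul_of_nonneg_left _ (hc i)
    apply Real.exp_le_exp.mpr
    have : (i:ℝ) ≤ (K:ℝ) + 1 := by
      have := (Finset.mem_range.mp hi).le
      exact_mod_cast le_trans (Nat.cast_le.mpr this) (by linarith : (K:ℝ) ≤ K + 1)
    nlinarith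
  have h2sum : ∑ i ∈ Finset.range K, c i * Real.exp (-(i:ℝ)*δ) ≤ auxF c δ :=
    Summable.sum_le_tsum _ (fun i _ => mul_nonneg (hc i) (Real.exp_pos _).le) (hsum δ hδ0)
  have h3 : (∑ i ∈ Finset.range K, c i) * Real.exp (-((K:ℝ)+1)*δ)
      = ∑ i ∈ Finset.range K, c i * Real.exp (-((K:ℝ)+1)*δ) := Finset.sum_mul _ _ _
  have hS0 : 0 ≤ ∑ i ∈ Finset.range K, c i := Finset.sum_nonneg fun i _ => hc i
  calc B ≤ max B 1 := le_max_left _ _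
    _ = (2 * max B 1) * (1/2) := by ring
    _ ≤ (∑ i ∈ Finset.range K, c i) * Real.exp (-((K:ℝ)+1)*δ) := by
        apply mul_le_mul hK hexp (by norm_num) hS0
    _ = ∑ i ∈ Finset.range K, c i * Real.exp (-((K:ℝ)+1)*δ) := h3
    _ ≤ ∑ i ∈ Finset.range K, c i * Real.exp (-(i:ℝ)*δ) := Finset.sum_le_sum hterm
    _ ≤ auxF c δ := h2sum

lemma aux_G_top (hc : ∀ n, 0 ≤ c n) (hc0 : c 0 = 1)
    (hsum : ∀ δ : ℝ, 0 < δ → Summable fun n : ℕ => c n * Real.exp (-(n : ℝ) * δ))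
    (hsum1 : ∀ δ : ℝ, 0 < δ → Summable fun n : ℕ => (n : ℝ) * c n * Real.exp (-(n : ℝ) * δ))
    (hdiv : ¬ Summable c) :
    Tendsto (auxG c) (𝓝[>] (0:ℝ)) atTop := by
  rw [tendsto_atTop]
  intro M
  set M' := max M 1 with hM'def
  have hM'pos : (0:ℝ) < M' := lt_of_lt_of_le one_pos (le_max_right _ _)
  set N := ⌈2 * M'⌉₊ with hNdef
  have hN : 2 * M' ≤ (N:ℝ) := Nat.le_ceil _
  set S := ∑ i ∈ Finset.range N, c i with hSdef
  have hS0 : 0 ≤ S := Finset.sum_nonneg fun i _ => hc i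
  filter_upwards [(aux_F_top hc hsum hdiv).eventually_ge_atTop (2 * S),
    self_mem_nhdsWithin] with δ hFδ hδ0
  replace hδ0 : (0:ℝ) < δ := hδ0
  have hsδ := hsum δ hδ0
  have hs1δ := hsum1 δ hδ0
  have hFpos : 0 < auxF c δ := zero_lt_one.trans_le (aux_F_ge_one hc hc0 hsδ)
  have htailF : Summable fun k : ℕ => c (k+N) * Real.exp (-((k+N : ℕ):ℝ) * δ) :=
    (summable_nat_add_iff (f := fun n : ℕ => c n * Real.exp (-(n:ℝ)*δ)) N).mpr hsδ
  have htailH : Summable fun k : ℕ => ((k+N : ℕ):ℝ) * c (k+N) * Real.exp (-((k+N:ℕ):ℝ) * δ) :=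
    (summable_nat_add_iff (f := fun n : ℕ => (n:ℝ) * c n * Real.exp (-(n:ℝ)*δ)) N).mpr hs1δ
  have hFsplit : (∑ i ∈ Finset.range N, c i * Real.exp (-(i:ℝ)*δ))
      + (∑' k : ℕ, c (k+N) * Real.exp (-((k+N:ℕ):ℝ)*δ)) = auxF c δ :=
    Summable.sum_add_tsum_nat_add (f := fun n : ℕ => c n * Real.exp (-(n:ℝ)*δ)) N hsδ
  have hHsplit : (∑ i ∈ Finset.range N, (i:ℝ) * c i * Real.exp (-(i:ℝ)*δ))
      + (∑' k : ℕ, ((k+N:ℕ):ℝ) * c (k+N) * Real.exp (-((k+N:ℕ):ℝ)*δ)) = auxH c δ :=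
    Summable.sum_add_tsum_nat_add (f := fun n : ℕ => (n:ℝ) * c n * Real.exp (-(n:ℝ)*δ)) N hs1δ
  have hheadF_le : ∑ i ∈ Finset.range N, c i * Real.exp (-(i:ℝ)*δ) ≤ S := by
    apply Finset.sum_le_sum
    intro i _
    have h1 : Real.exp (-(i:ℝ)*δ) ≤ 1 := by
      rw [show (1:ℝ) = Real.exp 0 from (Real.exp_zero).symm]
      apply Real.exp_le_exp.mpr
      have : (0:ℝ) ≤ (i:ℝ) * δ := mul_nonneg i.cast_nonneg hδ0.le
      linarith
    nlinarith [hc i]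
  have hheadH_0 : 0 ≤ ∑ i ∈ Finset.range N, (i:ℝ) * c i * Real.exp (-(i:ℝ)*δ) :=
    Finset.sum_nonneg fun i _ =>
      mul_nonneg (mul_nonneg i.cast_nonneg (hc i)) (Real.exp_pos _).le
  have hNt : (N:ℝ) * (∑' k : ℕ, c (k+N) * Real.exp (-((k+N:ℕ):ℝ) * δ))
      ≤ ∑' k : ℕ, ((k+N:ℕ):ℝ) * c (k+N) * Real.exp (-((k+N:ℕ):ℝ)*δ) := by
    rw [← tsum_mul_left]
    apply Summable.tsum_le_tsum _ (htailF.mul_left _) htailH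
    intro k
    have hle : (N:ℝ) ≤ ((k+N:ℕ):ℝ) := by exact_mod_cast Nat.le_add_left N k
    rw [← mul_assoc]
    exact mul_le_mul_of_nonneg_right
      (mul_le_mul_of_nonneg_right hle (hc _)) (Real.exp_pos _).le
  have htailF_nonneg : 0 ≤ ∑' k : ℕ, c (k+N) * Real.exp (-((k+N:ℕ):ℝ) * δ) :=
    tsum_nonneg fun k => mul_nonneg (hc _) (Real.exp_pos _).le
  have hH0 := aux_H_nonneg hc δ
  -- assemble: M * F ≤ H
  show M ≤ auxG c δ
  rw [show auxG c δ = auxH c δ / auxF c δ from rfl, le_div_iff₀ hFpos]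
  have hMM' : M ≤ M' := le_max_left _ _
  have hNn : (0:ℝ) ≤ N := N.cast_nonneg
  nlinarith [mul_nonneg hNn (sub_nonneg.mpr hheadF_le),
    mul_nonneg hNn (sub_nonneg.mpr hFδ),
    mul_nonneg (sub_nonneg.mpr hN) hFpos.le,
    mul_nonneg (sub_nonneg.mpr hMM') hFpos.le]

lemma aux_G_zero (hc : ∀ n, 0 ≤ c n) (hc0 : c 0 = 1)
    (hsum : ∀ δ : ℝ, 0 < δ → Summable fun n : ℕ => c n * Real.exp (-(n : ℝ) * δ))
    (hsum1 : ∀ δ : ℝ, 0 < δ → Summable fun n : ℕ => (n : ℝ) * c n * Real.exp (-(n : ℝ) * δ)) :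
    Tendsto (auxG c) atTop (𝓝 0) := by
  have key : ∀ δ : ℝ, 1 ≤ δ → auxG c δ ≤ Real.exp (1 - δ) * auxH c 1 := by
    intro δ hδ1
    have hδ0 : (0:ℝ) < δ := lt_of_lt_of_le one_pos hδ1
    have h1 : auxG c δ ≤ auxH c δ :=
      div_le_self (aux_H_nonneg hc δ) (aux_F_ge_one hc hc0 (hsum δ hδ0))
    refine h1.trans ?_
    have hterm : ∀ n : ℕ, (n:ℝ) * c n * Real.exp (-(n:ℝ)*δ)
        ≤ Real.exp (1-δ) * ((n:ℝ) * c n * Real.exp (-(n:ℝ)*1)) := by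
      intro n
      rcases Nat.eq_zero_or_pos n with h | h
      · simp [h]
      · have h1n : (1:ℝ) ≤ n := by exact_mod_cast h
        have hE : Real.exp (-(n:ℝ)*δ) ≤ Real.exp (1-δ) * Real.exp (-(n:ℝ)*1) := by
          rw [← Real.exp_add]
          apply Real.exp_le_exp.mpr
          nlinarith
        calc (n:ℝ) * c n * Real.exp (-(n:ℝ)*δ)
            ≤ (n:ℝ) * c n * (Real.exp (1-δ) * Real.exp (-(n:ℝ)*1)) :=
              mul_le_mul_of_nonneg_left hE (mul_nonneg n.cast_nonneg (hc n))
          _ = Real.exp (1-δ) * ((n:ℝ) * c n * Real.exp (-(n:ℝ)*1)) := by ring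
    have h2 := Summable.tsum_le_tsum hterm (hsum1 δ hδ0) ((hsum1 1 one_pos).mul_left _)
    calc auxH c δ ≤ ∑' n : ℕ, Real.exp (1-δ) * ((n:ℝ) * c n * Real.exp (-(n:ℝ)*1)) := h2
      _ = Real.exp (1-δ) * auxH c 1 := tsum_mul_left
  have hlim : Tendsto (fun δ : ℝ => Real.exp (1 - δ) * auxH c 1) atTop (𝓝 0) := by
    have h1 : Tendsto (fun δ : ℝ => 1 - δ) atTop atBot := by
      have := tendsto_atBot_add_const_left (l := atTop) (1:ℝ) tendsto_neg_atTop_atBot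
      simpa [sub_eq_add_neg] using this
    have h2 := (Real.tendsto_exp_atBot.comp h1).mul_const (auxH c 1)
    simpa using h2
  apply squeeze_zero' _ _ hlim
  · filter_upwards [eventually_ge_atTop (1:ℝ)] with δ hδ1
    have hδ0 : (0:ℝ) < δ := lt_of_lt_of_le one_pos hδ1
    exact div_nonneg (aux_H_nonneg hc δ)
      (zero_le_one.trans (aux_F_ge_one hc hc0 (hsum δ hδ0)))
  · filter_upwards [eventually_ge_atTop (1:ℝ)] with δ hδ1
    exact key δ hδ1

lemma aux_G_contAt (hc : ∀ n, 0 ≤ c n) (hc0 : c 0 = 1)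
    (hsum : ∀ δ : ℝ, 0 < δ → Summable fun n : ℕ => c n * Real.exp (-(n : ℝ) * δ))
    (hsum1 : ∀ δ : ℝ, 0 < δ → Summable fun n : ℕ => (n : ℝ) * c n * Real.exp (-(n : ℝ) * δ))
    {δ0 : ℝ} (h0 : 0 < δ0) : ContinuousAt (auxG c) δ0 := by
  set a := δ0/2 with ha_def
  have ha : 0 < a := half_pos h0
  have haδ : a < δ0 := half_lt_self h0
  have hmem : Set.Ioi a ∈ 𝓝 δ0 := Ioi_mem_nhds haδ
  have hbound : ∀ (n : ℕ) (δ : ℝ), δ ∈ Set.Ioi a → Real.exp (-(n:ℝ)*δ) ≤ Real.exp (-(n:ℝ)*a) := by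
    intro n δ hδ
    apply Real.exp_le_exp.mpr
    have : a ≤ δ := (Set.mem_Ioi.mp hδ).le
    nlinarith [(n.cast_nonneg : (0:ℝ) ≤ n)]
  have cF : ContinuousOn (auxF c) (Set.Ioi a) := by
    apply continuousOn_tsum (u := fun n : ℕ => c n * Real.exp (-(n:ℝ)*a))
    · intro n
      exact (continuous_const.mul ((continuous_const.mul continuous_id).rexp)).continuousOn
    · exact hsum a ha
    · intro n δ hδ
      rw [Real.norm_eq_abs, abs_of_nonneg (mul_nonneg (hc n) (Real.exp_pos _).le)]
      exact mul_le_mul_of_nonneg_left (hbound n δ hδ) (hc n)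
  have cH : ContinuousOn (auxH c) (Set.Ioi a) := by
    apply continuousOn_tsum (u := fun n : ℕ => (n:ℝ) * c n * Real.exp (-(n:ℝ)*a))
    · intro n
      exact (continuous_const.mul ((continuous_const.mul continuous_id).rexp)).continuousOn
    · exact hsum1 a ha
    · intro n δ hδ
      rw [Real.norm_eq_abs, abs_of_nonneg
        (mul_nonneg (mul_nonneg n.cast_nonneg (hc n)) (Real.exp_pos _).le)]
      exact mul_le_mul_of_nonneg_left (hbound n δ hδ)
        (mul_nonneg n.cast_nonneg (hc n))
  have hFpos : auxF c δ0 ≠ 0 :=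
    (zero_lt_one.trans_le (aux_F_ge_one hc hc0 (hsum δ0 h0))).ne'
  exact (cH.continuousAt hmem).div (cF.continuousAt hmem) hFpos

set_option maxHeartbeats 1000000 in
lemma aux_G_anti (hc : ∀ n, 0 ≤ c n) (hc0 : c 0 = 1)
    (hsum : ∀ δ : ℝ, 0 < δ → Summable fun n : ℕ => c n * Real.exp (-(n : ℝ) * δ))
    (hsum1 : ∀ δ : ℝ, 0 < δ → Summable fun n : ℕ => (n : ℝ) * c n * Real.exp (-(n : ℝ) * δ))
    (hdiv : ¬ Summable c) :
    StrictAntiOn (auxG c) (Set.Ioi (0:ℝ)) := by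
  obtain ⟨m0, hm01, hm0pos⟩ : ∃ m : ℕ, 1 ≤ m ∧ 0 < c m := by
    by_contra h
    push_neg at h
    refine hdiv (summable_of_ne_finset_zero (s := {0}) fun n hn => ?_)
    have h1 : 1 ≤ n := Nat.one_le_iff_ne_zero.mpr (by simpa using hn)
    exact le_antisymm (h n h1) (hc n)
  intro δ1 hδ1 δ2 hδ2 h12
  have hδ1' : (0:ℝ) < δ1 := hδ1
  have hδ2' : (0:ℝ) < δ2 := hδ2
  have sF1 := hsum δ1 hδ1'
  have sF2 := hsum δ2 hδ2'
  have sH1 := hsum1 δ1 hδ1'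
  have sH2 := hsum1 δ2 hδ2'
  have posF : ∀ (δ : ℝ) (n : ℕ), 0 ≤ c n * Real.exp (-(n:ℝ)*δ) :=
    fun δ n => mul_nonneg (hc n) (Real.exp_pos _).le
  have posH : ∀ (δ : ℝ) (n : ℕ), 0 ≤ (n:ℝ) * c n * Real.exp (-(n:ℝ)*δ) :=
    fun δ n => mul_nonneg (mul_nonneg n.cast_nonneg (hc n)) (Real.exp_pos _).le
  have nF : ∀ {δ : ℝ}, (Summable fun n : ℕ => c n * Real.exp (-(n:ℝ)*δ)) →
      Summable fun n : ℕ => ‖c n * Real.exp (-(n:ℝ)*δ)‖ :=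
    fun {δ} h => h.congr fun n => (Real.norm_of_nonneg (posF δ n)).symm
  have nH : ∀ {δ : ℝ}, (Summable fun n : ℕ => (n:ℝ) * c n * Real.exp (-(n:ℝ)*δ)) →
      Summable fun n : ℕ => ‖(n:ℝ) * c n * Real.exp (-(n:ℝ)*δ)‖ :=
    fun {δ} h => h.congr fun n => (Real.norm_of_nonneg (posH δ n)).symm
  have hFpos1 : 0 < auxF c δ1 := zero_lt_one.trans_le (aux_F_ge_one hc hc0 sF1)
  have hFpos2 : 0 < auxF c δ2 := zero_lt_one.trans_le (aux_F_ge_one hc hc0 sF2)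
  show auxG c δ2 < auxG c δ1
  rw [show auxG c δ2 = auxH c δ2 / auxF c δ2 from rfl,
    show auxG c δ1 = auxH c δ1 / auxF c δ1 from rfl,
    div_lt_div_iff₀ hFpos2 hFpos1]
  -- goal : auxH c δ2 * auxF c δ1 < auxH c δ1 * auxF c δ2
  have e1 : auxH c δ1 * auxF c δ2 = ∑' p : ℕ × ℕ,
      ((p.1:ℝ) * c p.1 * Real.exp (-(p.1:ℝ)*δ1)) * (c p.2 * Real.exp (-(p.2:ℝ)*δ2)) :=
    tsum_mul_tsum_of_summable_norm (nH sH1) (nF sF2)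
  have e2 : auxH c δ2 * auxF c δ1 = ∑' p : ℕ × ℕ,
      ((p.1:ℝ) * c p.1 * Real.exp (-(p.1:ℝ)*δ2)) * (c p.2 * Real.exp (-(p.2:ℝ)*δ1)) :=
    tsum_mul_tsum_of_summable_norm (nH sH2) (nF sF1)
  have Sa : Summable (fun p : ℕ × ℕ =>
      ((p.1:ℝ) * c p.1 * Real.exp (-(p.1:ℝ)*δ1)) * (c p.2 * Real.exp (-(p.2:ℝ)*δ2))) :=
    Summable.mul_of_nonneg sH1 sF2 (fun n => posH δ1 n) (fun n => posF δ2 n)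
  have Sb' : Summable (fun p : ℕ × ℕ =>
      ((p.1:ℝ) * c p.1 * Real.exp (-(p.1:ℝ)*δ2)) * (c p.2 * Real.exp (-(p.2:ℝ)*δ1))) :=
    Summable.mul_of_nonneg sH2 sF1 (fun n => posH δ2 n) (fun n => posF δ1 n)
  have e2' : auxH c δ2 * auxF c δ1 = ∑' p : ℕ × ℕ,
      ((p.2:ℝ) * c p.2 * Real.exp (-(p.2:ℝ)*δ2)) * (c p.1 * Real.exp (-(p.1:ℝ)*δ1)) := by
    rw [e2]
    exact (Equiv.tsum_eq (Equiv.prodComm ℕ ℕ) (fun q : ℕ × ℕ =>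
      ((q.1:ℝ) * c q.1 * Real.exp (-(q.1:ℝ)*δ2)) * (c q.2 * Real.exp (-(q.2:ℝ)*δ1)))).symm
  have Sb : Summable (fun p : ℕ × ℕ =>
      ((p.2:ℝ) * c p.2 * Real.exp (-(p.2:ℝ)*δ2)) * (c p.1 * Real.exp (-(p.1:ℝ)*δ1))) :=
    (Equiv.prodComm ℕ ℕ).summable_iff.mpr Sb'
  set W : ℕ × ℕ → ℝ := fun p => ((p.1:ℝ) - (p.2:ℝ)) *
    (c p.1 * c p.2 * (Real.exp (-(p.1:ℝ)*δ1) * Real.exp (-(p.2:ℝ)*δ2))) with hW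
  have SW : Summable W := by
    refine (Sa.sub Sb).congr fun p => ?_
    simp only [hW]
    ring
  have hD : auxH c δ1 * auxF c δ2 - auxH c δ2 * auxF c δ1 = ∑' p : ℕ × ℕ, W p := by
    rw [e1, e2', ← Summable.tsum_sub Sa Sb]
    exact tsum_congr fun p => by simp only [hW]; ring
  have SWswap : Summable (fun p : ℕ × ℕ => W (p.2, p.1)) :=
    (Equiv.prodComm ℕ ℕ).summable_iff.mpr SW
  have hDswap : (∑' p : ℕ × ℕ, W p) = ∑' p : ℕ × ℕ, W (p.2, p.1) :=
    ((Equiv.prodComm ℕ ℕ).tsum_eq W).symm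
  have h2D : (∑' p : ℕ × ℕ, W p) + (∑' p : ℕ × ℕ, W (p.2, p.1))
      = ∑' p : ℕ × ℕ, (W p + W (p.2, p.1)) := (Summable.tsum_add SW SWswap).symm
  have hpos : 0 < ∑' p : ℕ × ℕ, (W p + W (p.2, p.1)) := by
    apply Summable.tsum_pos (SW.add SWswap) _ (m0, 0)
    · -- positivity at (m0, 0)
      simp only [hW, hc0, Nat.cast_zero, sub_zero, zero_sub, neg_zero, zero_mul,
        Real.exp_zero, mul_one, one_mul]
      have hm0R : (1:ℝ) ≤ (m0:ℝ) := by exact_mod_cast hm01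
      have hE : Real.exp (-(m0:ℝ)*δ2) < Real.exp (-(m0:ℝ)*δ1) := by
        apply Real.exp_lt_exp.mpr
        nlinarith
      nlinarith [mul_pos (mul_pos (zero_lt_one.trans_le hm0R) hm0pos) (sub_pos.mpr hE)]
    · -- nonnegativity of each term
      rintro ⟨m, n⟩
      simp only [hW]
      have hcc : 0 ≤ c m * c n := mul_nonneg (hc m) (hc n)
      rcases le_total n m with h | h
      · have hmn : (n:ℝ) ≤ (m:ℝ) := Nat.cast_le.mpr h
        have hE : Real.exp (-(n:ℝ)*δ1) * Real.exp (-(m:ℝ)*δ2)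
            ≤ Real.exp (-(m:ℝ)*δ1) * Real.exp (-(n:ℝ)*δ2) := by
          rw [← Real.exp_add, ← Real.exp_add]
          apply Real.exp_le_exp.mpr
          nlinarith
        nlinarith [mul_nonneg (mul_nonneg (sub_nonneg.mpr hmn) hcc) (sub_nonneg.mpr hE)]
      · have hmn : (m:ℝ) ≤ (n:ℝ) := Nat.cast_le.mpr h
        have hE : Real.exp (-(m:ℝ)*δ1) * Real.exp (-(n:ℝ)*δ2)
            ≤ Real.exp (-(n:ℝ)*δ1) * Real.exp (-(m:ℝ)*δ2) := by
          rw [← Real.exp_add, ← Real.exp_add]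
          apply Real.exp_le_exp.mpr
          nlinarith
        nlinarith [mul_nonneg (mul_nonneg (sub_nonneg.mpr hmn) hcc) (sub_nonneg.mpr hE)]
  have hfinal : 0 < auxH c δ1 * auxF c δ2 - auxH c δ2 * auxF c δ1 := by
    have h2D' : 2 * (auxH c δ1 * auxF c δ2 - auxH c δ2 * auxF c δ1)
        = ∑' p : ℕ × ℕ, (W p + W (p.2, p.1)) := by
      rw [← h2D, ← hDswap, hD]
      ring
    linarith
  linarith

end aux
/-- For a nonnegative sequence `(c_n)` with `c 0 = 1`, summable weighted series
for every `δ > 0`, and `Σ c_n = ∞`, the function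
`G(δ) = (Σ n c_n e^{-nδ}) / (Σ c_n e^{-nδ})` tends to `+∞` as `δ → 0⁺` and to `0` as
`δ → +∞`; consequently for every `n ≥ 1` there is a unique `δ_n > 0` with `G(δ_n) = n`,
and any such sequence `δ_n` tends to `0`. -/
theorem stmt_1 (c : ℕ → ℝ) (hc : ∀ n, 0 ≤ c n) (hc0 : c 0 = 1)
    (hsum : ∀ δ : ℝ, 0 < δ → Summable (fun n : ℕ => c n * Real.exp (-(n : ℝ) * δ)))
    (hsum1 : ∀ δ : ℝ, 0 < δ →
      Summable (fun n : ℕ => (n : ℝ) * c n * Real.exp (-(n : ℝ) * δ)))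
    (hdiv : ¬ Summable c)
    (G : ℝ → ℝ)
    (hG : ∀ δ : ℝ, G δ =
      (∑' n : ℕ, (n : ℝ) * c n * Real.exp (-(n : ℝ) * δ)) /
        (∑' n : ℕ, c n * Real.exp (-(n : ℝ) * δ))) :
    Tendsto G (nhdsWithin 0 (Set.Ioi 0)) atTop ∧
    Tendsto G atTop (nhds 0) ∧
    (∀ n : ℕ, 1 ≤ n → ∃! δ : ℝ, 0 < δ ∧ G δ = n) ∧
    (∀ d : ℕ → ℝ, (∀ n : ℕ, 1 ≤ n → 0 < d n ∧ G (d n) = n) →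
      Tendsto d atTop (nhds 0)) := by
  have hGfun : G = auxG c := funext fun δ => hG δ
  subst hGfun
  have htop := aux_G_top hc hc0 hsum hsum1 hdiv
  have hzero := aux_G_zero hc hc0 hsum hsum1
  have hanti := aux_G_anti hc hc0 hsum hsum1 hdiv
  refine ⟨htop, hzero, ?_, ?_⟩
  · intro n hn
    have hn1 : (1:ℝ) ≤ (n:ℝ) := by exact_mod_cast hn
    obtain ⟨a, ha1, ha0⟩ :=
      ((htop.eventually_ge_atTop ((n:ℝ)+1)).and self_mem_nhdsWithin).exists
    have ha0' : (0:ℝ) < a := ha0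
    obtain ⟨b, hab, hGb⟩ := ((eventually_ge_atTop (a+1)).and
      (hzero.eventually_lt_const (by norm_num : (0:ℝ) < 1))).exists
    have hb0 : (0:ℝ) < b := by linarith
    have hab' : a ≤ b := by linarith
    have hcont : ContinuousOn (auxG c) (Set.Icc a b) := fun x hx =>
      (aux_G_contAt hc hc0 hsum hsum1 (lt_of_lt_of_le ha0' hx.1)).continuousWithinAt
    have hmem : (n:ℝ) ∈ Set.Icc (auxG c b) (auxG c a) := ⟨by linarith, by linarith⟩
    obtain ⟨δ, hδab, hδeq⟩ := intermediate_value_Icc' hab' hcont hmem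
    have hδ0 : (0:ℝ) < δ := lt_of_lt_of_le ha0' hδab.1
    refine ⟨δ, ⟨hδ0, hδeq⟩, ?_⟩
    rintro δ' ⟨hδ'0, hδ'eq⟩
    exact hanti.injOn (Set.mem_Ioi.mpr hδ'0) (Set.mem_Ioi.mpr hδ0)
      (by rw [hδ'eq, hδeq])
  · intro d hd
    rw [Metric.tendsto_atTop]
    intro ε hε
    refine ⟨max 1 (⌈auxG c ε⌉₊ + 1), fun n hn => ?_⟩
    have hn1 : 1 ≤ n := le_trans (le_max_left _ _) hn
    obtain ⟨hdn0, hdneq⟩ := hd n hn1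
    have hGε : auxG c ε < (n:ℝ) := by
      have h1 : auxG c ε ≤ (⌈auxG c ε⌉₊ : ℝ) := Nat.le_ceil _
      have h2 : (⌈auxG c ε⌉₊ + 1 : ℕ) ≤ n := le_trans (le_max_right _ _) hn
      have h3 : ((⌈auxG c ε⌉₊ : ℝ) + 1) ≤ (n:ℝ) := by exact_mod_cast h2
      linarith
    have hdnε : d n < ε := by
      by_contra h
      push_neg at h
      have hle : auxG c (d n) ≤ auxG c ε := by
        rcases eq_or_lt_of_le h with h' | h'
        · rw [← h']
        · exact (hanti (Set.mem_Ioi.mpr hε)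
            (Set.mem_Ioi.mpr (lt_trans hε h')) h').le
      rw [hdneq] at hle
      linarith
    rw [Real.dist_eq, sub_zero, abs_of_pos hdn0]
    exact hdnε
end

section
/- Let (c_n)_{n≥0} be a sequence of nonnegative real numbers with c_0 = 1 such that for every δ > 0 the series Σ_{n≥0} c_n e^{-nδ} and Σ_{n≥0} n c_n e^{-nδ} converge, with Σ_{n≥0} c_n = ∞, and let G(δ) := (Σ_{n≥0} n c_n e^{-nδ}) / (Σ_{n≥0} c_n e^{-nδ}). Assume there exist constants K > 0 and ρ > 0 such that G(δ) · δ^{ρ+1} → K as δ → 0⁺. Let δ_n > 0 denote the unique solution of the Khintchine equation G(δ_n) = n. Then δ_n ~ (K/n)^{1/(ρ+1)} as n → ∞ (i.e. δ_n · (n/K)^{1/(ρ+1)} → 1), and in particular n·δ_n → ∞. -/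
open Real Filter Topology

/-- With `G(δ) = (Σ n c_n e^{-nδ}) / (Σ c_n e^{-nδ})` as in the Khintchine
setting, if `G(δ)·δ^{ρ+1} → K > 0` as `δ → 0⁺` and `δ_n > 0` solves `G(δ_n) = n`, then
`δ_n ~ (K/n)^{1/(ρ+1)}`, i.e. `δ_n (n/K)^{1/(ρ+1)} → 1`, and in particular `n δ_n → ∞`. -/
theorem stmt_2 (c : ℕ → ℝ) (hc : ∀ n, 0 ≤ c n) (hc0 : c 0 = 1)
    (hsum : ∀ δ : ℝ, 0 < δ → Summable (fun n : ℕ => c n * Real.exp (-(n : ℝ) * δ)))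
    (hsum1 : ∀ δ : ℝ, 0 < δ →
      Summable (fun n : ℕ => (n : ℝ) * c n * Real.exp (-(n : ℝ) * δ)))
    (hdiv : ¬ Summable c)
    (G : ℝ → ℝ)
    (hG : ∀ δ : ℝ, G δ =
      (∑' n : ℕ, (n : ℝ) * c n * Real.exp (-(n : ℝ) * δ)) /
        (∑' n : ℕ, c n * Real.exp (-(n : ℝ) * δ)))
    (K ρ : ℝ) (hK : 0 < K) (hρ : 0 < ρ)
    (hlim : Tendsto (fun δ : ℝ => G δ * δ ^ (ρ + 1))
      (nhdsWithin 0 (Set.Ioi 0)) (nhds K))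
    (δseq : ℕ → ℝ)
    (hδseq : ∀ n : ℕ, 1 ≤ n → 0 < δseq n ∧ G (δseq n) = n) :
    Tendsto (fun n : ℕ => δseq n * ((n : ℝ) / K) ^ ((1 : ℝ) / (ρ + 1)))
      atTop (nhds 1) ∧
    Tendsto (fun n : ℕ => (n : ℝ) * δseq n) atTop atTop := by
  have hρ1 : (0:ℝ) < ρ + 1 := by linarith
  have hρ1' : (ρ + 1 : ℝ) ≠ 0 := ne_of_gt hρ1
  -- G is bounded above by M ε on [ε,∞)
  have hGbound : ∀ ε : ℝ, 0 < ε → ∀ δ : ℝ, ε ≤ δ →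
      G δ ≤ ∑' n : ℕ, (n : ℝ) * c n * Real.exp (-(n : ℝ) * ε) := by
    intro ε hε δ hδ
    have hδpos : 0 < δ := lt_of_lt_of_le hε hδ
    have hnum_nonneg : (0:ℝ) ≤ ∑' n : ℕ, (n : ℝ) * c n * Real.exp (-(n : ℝ) * δ) :=
      tsum_nonneg fun n => mul_nonneg (mul_nonneg (Nat.cast_nonneg n) (hc n)) (exp_nonneg _)
    have hden_ge : (1:ℝ) ≤ ∑' n : ℕ, c n * Real.exp (-(n : ℝ) * δ) := by
      have := Summable.le_tsum (hsum δ hδpos) 0 (fun i _ => mul_nonneg (hc i) (exp_nonneg _))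
      simpa [hc0] using this
    have hnum_le : (∑' n : ℕ, (n : ℝ) * c n * Real.exp (-(n : ℝ) * δ)) ≤
        ∑' n : ℕ, (n : ℝ) * c n * Real.exp (-(n : ℝ) * ε) := by
      refine Summable.tsum_le_tsum (fun n => ?_) (hsum1 δ hδpos) (hsum1 ε hε)
      refine mul_le_mul_of_nonneg_left ?_ (mul_nonneg (Nat.cast_nonneg n) (hc n))
      exact Real.exp_le_exp.2 (by nlinarith [Nat.cast_nonneg (α := ℝ) n])
    calc G δ ≤ ∑' n : ℕ, (n : ℝ) * c n * Real.exp (-(n : ℝ) * δ) := by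
          rw [hG δ]; exact div_le_self hnum_nonneg hden_ge
      _ ≤ _ := hnum_le
  -- δseq → 0 within (0,∞)
  have hδ0 : Tendsto δseq atTop (nhdsWithin 0 (Set.Ioi 0)) := by
    rw [tendsto_nhdsWithin_iff]
    constructor
    · rw [tendsto_order]
      constructor
      · intro a ha
        filter_upwards [eventually_ge_atTop 1] with n hn
        exact lt_trans ha (hδseq n hn).1
      · intro ε hε
        set M := ∑' n : ℕ, (n : ℝ) * c n * Real.exp (-(n : ℝ) * ε) with hM
        filter_upwards [eventually_ge_atTop (max 1 (⌊M⌋₊ + 1))] with n hn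
        have hn1 : 1 ≤ n := le_trans (le_max_left _ _) hn
        have hnM : M < (n : ℝ) := by
          have h1 : (⌊M⌋₊ + 1 : ℕ) ≤ n := le_trans (le_max_right _ _) hn
          have h2 : M < (⌊M⌋₊ + 1 : ℕ) := by
            push_cast
            exact Nat.lt_floor_add_one M
          exact lt_of_lt_of_le h2 (by exact_mod_cast h1)
        by_contra h
        push_neg at h
        have := hGbound ε hε (δseq n) h
        rw [(hδseq n hn1).2] at this
        exact absurd this (not_le.2 hnM)
    · filter_upwards [eventually_ge_atTop 1] with n hn
      exact (hδseq n hn).1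
  -- n * δ_n^(ρ+1) → K
  have h2 : Tendsto (fun n : ℕ => (n : ℝ) * δseq n ^ (ρ + 1)) atTop (nhds K) := by
    refine (hlim.comp hδ0).congr' ?_
    filter_upwards [eventually_ge_atTop 1] with n hn
    simp [Function.comp, (hδseq n hn).2]
  -- n * δ_n^(ρ+1) / K → 1
  have h3 : Tendsto (fun n : ℕ => (n : ℝ) * δseq n ^ (ρ + 1) / K) atTop (nhds 1) := by
    simpa [div_self hK.ne'] using h2.div_const K
  constructor
  · have h4 : Tendsto (fun n : ℕ => ((n : ℝ) * δseq n ^ (ρ + 1) / K) ^ ((1:ℝ)/(ρ+1)))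
        atTop (nhds 1) := by
      simpa using h3.rpow_const (Or.inr (by positivity))
    refine h4.congr' ?_
    filter_upwards [eventually_ge_atTop 1] with n hn
    have hδp : 0 < δseq n := (hδseq n hn).1
    have hnn : (0:ℝ) ≤ (n:ℝ)/K := div_nonneg (Nat.cast_nonneg n) hK.le
    have : (n : ℝ) * δseq n ^ (ρ + 1) / K = ((n:ℝ)/K) * δseq n ^ (ρ + 1) := by ring
    rw [this, Real.mul_rpow hnn (Real.rpow_nonneg hδp.le _),
      ← Real.rpow_mul hδp.le, mul_one_div, div_self hρ1', Real.rpow_one, mul_comm]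
  · have hfac1 : Tendsto (fun n : ℕ => ((n : ℝ) * δseq n ^ (ρ + 1)) ^ ((1:ℝ)/(ρ+1)))
        atTop (nhds (K ^ ((1:ℝ)/(ρ+1)))) :=
      h2.rpow_const (Or.inl hK.ne')
    have hfac2 : Tendsto (fun n : ℕ => (n : ℝ) ^ (ρ/(ρ+1))) atTop atTop :=
      (tendsto_rpow_atTop (by positivity)).comp tendsto_natCast_atTop_atTop
    have hmul := hfac1.pos_mul_atTop (Real.rpow_pos_of_pos hK _) hfac2
    refine hmul.congr' ?_
    filter_upwards [eventually_ge_atTop 1] with n hn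
    have hδp : 0 < δseq n := (hδseq n hn).1
    have hnp : (0:ℝ) < n := by exact_mod_cast hn
    rw [Real.mul_rpow hnp.le (Real.rpow_nonneg hδp.le _),
      ← Real.rpow_mul hδp.le, mul_one_div, div_self hρ1', Real.rpow_one,
      mul_right_comm, ← Real.rpow_add hnp]
    rw [← add_div]
    rw [show (1 + ρ)/(ρ+1) = 1 by rw [add_comm]; exact div_self hρ1', Real.rpow_one]
end

section
/- Let b_k ≥ 0 (k ≥ 1), 0 < a_k ≤ 1 (k ≥ 1), and ξ_j ∈ ℝ (j ≥ 1), and let s ∈ ℂ with σ := Re(s) > 0 be such that Σ_{k≥1} Σ_{j≥1} b_k a_k^j |ξ_j| (kj)^{-σ} < ∞. Then ∫_0^1 δ^{s-1} ( Σ_{k≥1} Σ_{j≥1} b_k ξ_j a_k^j e^{-δ k j} ) dδ = Γ(s) · Σ_{k≥1} Σ_{j≥1} b_k ξ_j a_k^j (kj)^{-s} − Σ_{k≥1} Σ_{j≥1} Γ(s, kj) · b_k ξ_j a_k^j (kj)^{-s}, where Γ(s,u) = ∫_u^∞ x^{s-1} e^{-x} dx is the upper incomplete Gamma function. -/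
open Real Complex Set MeasureTheory

/-- The upper incomplete Gamma function `Γ(s, u) = ∫_u^∞ x^{s-1} e^{-x} dx`. -/
noncomputable def upperIncompleteGamma (s : ℂ) (u : ℝ) : ℂ :=
  ∫ x in Set.Ioi u, (x : ℂ) ^ (s - 1) * Complex.exp (-(x : ℂ))


lemma aux_int {s : ℂ} (hs : 0 < s.re) {n : ℝ} (hn : 0 < n) :
    IntegrableOn (fun δ : ℝ => (δ : ℂ) ^ (s - 1) * (Real.exp (-(n * δ)) : ℂ)) (Ioi 0) := by
  have h := Complex.GammaIntegral_convergent hs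
  rw [← mul_zero n, ← integrableOn_Ioi_comp_mul_left_iff _ _ hn] at h
  have hne : ((n : ℂ)) ^ (s - 1) ≠ 0 := by
    simp [Complex.cpow_eq_zero_iff, Complex.ofReal_ne_zero, hn.ne']
  refine IntegrableOn.congr_fun (h.const_mul (((n : ℂ) ^ (s - 1))⁻¹)) (fun t ht => ?_) measurableSet_Ioi
  have ht' : (0:ℝ) < t := ht
  have : ((n * t : ℝ) : ℂ) ^ (s - 1) = (n : ℂ) ^ (s - 1) * (t : ℂ) ^ (s - 1) := by
    rw [Complex.ofReal_mul]
    exact mul_cpow_ofReal_nonneg hn.le ht'.le _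
  simp only [this]
  field_simp

lemma aux_int_real {σ : ℝ} (hσ : 0 < σ) {n : ℝ} (hn : 0 < n) :
    IntegrableOn (fun δ : ℝ => δ ^ (σ - 1) * Real.exp (-(n * δ))) (Ioi 0) := by
  have h := Real.GammaIntegral_convergent hσ
  rw [← mul_zero n, ← integrableOn_Ioi_comp_mul_left_iff _ _ hn] at h
  refine IntegrableOn.congr_fun (h.const_mul ((n ^ (σ - 1))⁻¹))
    (fun t ht => ?_) measurableSet_Ioi
  have ht' : (0:ℝ) < t := ht
  have hne : n ^ (σ - 1) ≠ 0 := (Real.rpow_pos_of_pos hn _).ne'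
  have : (n * t) ^ (σ - 1) = n ^ (σ - 1) * t ^ (σ - 1) := Real.mul_rpow hn.le ht'.le
  simp only [this]
  field_simp

lemma key_int {s : ℂ} (hs : 0 < s.re) {n : ℝ} (hn : 0 < n) :
    ∫ δ in Ioo (0:ℝ) 1, (δ : ℂ) ^ (s - 1) * (Real.exp (-(n * δ)) : ℂ)
      = (Complex.Gamma s - upperIncompleteGamma s n) * (n : ℂ) ^ (-s) := by
  have hne0 : (n : ℂ) ≠ 0 := Complex.ofReal_ne_zero.mpr hn.ne'
  have hIoo : Ioo (0:ℝ) 1 = Ioi 0 \ Ici 1 := by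
    ext x; simp [mem_Ioo, mem_diff, not_le, and_comm]
  rw [hIoo, integral_diff measurableSet_Ici (aux_int hs hn)
    (fun x hx => lt_of_lt_of_le zero_lt_one hx), MeasureTheory.integral_Ici_eq_integral_Ioi]
  have h0 : ∫ δ in Ioi (0:ℝ), (δ : ℂ) ^ (s - 1) * (Real.exp (-(n * δ)) : ℂ)
      = (1 / (n:ℂ)) ^ s * Complex.Gamma s := by
    rw [← integral_cpow_mul_exp_neg_mul_Ioi hs hn]
    refine setIntegral_congr_fun measurableSet_Ioi fun t ht => ?_
    congr 1
    push_cast [Complex.ofReal_exp]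
    ring_nf
  have h1 : ∫ δ in Ioi (1:ℝ), (δ : ℂ) ^ (s - 1) * (Real.exp (-(n * δ)) : ℂ)
      = (n : ℂ) ^ (-s) * upperIncompleteGamma s n := by
    have hcomp := integral_comp_mul_left_Ioi
      (fun x : ℝ => (x : ℂ) ^ (s - 1) * Complex.exp (-(x : ℂ))) 1 hn
    rw [mul_one] at hcomp
    calc ∫ δ in Ioi (1:ℝ), (δ : ℂ) ^ (s - 1) * (Real.exp (-(n * δ)) : ℂ)
        = ∫ δ in Ioi (1:ℝ), ((n : ℂ) ^ (s - 1))⁻¹ •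
            (((n * δ : ℝ) : ℂ) ^ (s - 1) * Complex.exp (-((n * δ : ℝ) : ℂ))) := by
          refine setIntegral_congr_fun measurableSet_Ioi fun t ht => ?_
          have ht' : (0:ℝ) < t := lt_trans zero_lt_one ht
          have hne : ((n : ℂ)) ^ (s - 1) ≠ 0 := by
            simp [Complex.cpow_eq_zero_iff, Complex.ofReal_ne_zero, hn.ne']
          rw [Complex.ofReal_mul, mul_cpow_ofReal_nonneg hn.le ht'.le]
          push_cast [Complex.ofReal_exp]
          field_simp
          rw [smul_eq_mul, mul_comm _ ((n:ℂ) ^ (s - 1)), one_div, inv_mul_cancel_left₀ hne]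
      _ = ((n : ℂ) ^ (s - 1))⁻¹ • ∫ δ in Ioi (1:ℝ),
            (((n * δ : ℝ) : ℂ) ^ (s - 1) * Complex.exp (-((n * δ : ℝ) : ℂ))) :=
          integral_smul _ _
      _ = ((n : ℂ) ^ (s - 1))⁻¹ • (n⁻¹ • ∫ x in Ioi n,
            ((x : ℂ) ^ (s - 1) * Complex.exp (-(x : ℂ)))) := by rw [hcomp]
      _ = (n : ℂ) ^ (-s) * upperIncompleteGamma s n := by
          rw [upperIncompleteGamma, Complex.real_smul, Complex.ofReal_inv, smul_eq_mul,
            ← mul_assoc]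
          congr 1
          rw [show (-s) = (-(s-1)) + (-1) by ring, Complex.cpow_add _ _ hne0,
            Complex.cpow_neg, Complex.cpow_neg, Complex.cpow_one]
  rw [h0, h1]
  rw [one_div, Complex.inv_cpow _ _ (by rw [Complex.arg_ofReal_of_nonneg hn.le]; positivity),
    ← Complex.cpow_neg]
  ring

lemma aux_int_real' {σ : ℝ} (hσ : 0 < σ) :
    IntegrableOn (fun x : ℝ => x ^ (σ - 1) * Real.exp (-x)) (Ioi 0) :=
  (Real.GammaIntegral_convergent hσ).congr_fun (fun x _ => mul_comm _ _) measurableSet_Ioi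

lemma norm_upper {s : ℂ} (hs : 0 < s.re) {n : ℝ} (hn : 0 < n) :
    ‖upperIncompleteGamma s n‖ ≤ Real.Gamma s.re := by
  calc ‖upperIncompleteGamma s n‖
      ≤ ∫ x in Ioi n, ‖(x : ℂ) ^ (s - 1) * Complex.exp (-(x : ℂ))‖ :=
        norm_integral_le_integral_norm _
    _ = ∫ x in Ioi n, x ^ (s.re - 1) * Real.exp (-x) := by
        refine setIntegral_congr_fun measurableSet_Ioi fun x hx => ?_
        have hx' : (0:ℝ) < x := lt_trans hn hx
        rw [norm_mul,
          Complex.norm_cpow_eq_rpow_re_of_pos hx', Complex.norm_exp]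
        simp [Complex.sub_re]
    _ ≤ ∫ x in Ioi (0:ℝ), x ^ (s.re - 1) * Real.exp (-x) := by
        refine setIntegral_mono_set (aux_int_real' hs) ?_
          (HasSubset.Subset.eventuallyLE (Ioi_subset_Ioi hn.le))
        filter_upwards [ae_restrict_mem measurableSet_Ioi] with x hx
        have : (0:ℝ) < x := hx
        positivity
    _ = Real.Gamma s.re := by
        rw [Real.Gamma_eq_integral hs]
        exact setIntegral_congr_fun measurableSet_Ioi fun x _ => mul_comm _ _

lemma int_bound {σ : ℝ} (hσ : 0 < σ) {n : ℝ} (hn : 0 < n) :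
    ∫ δ in Ioo (0:ℝ) 1, δ ^ (σ - 1) * Real.exp (-(n * δ)) ≤ Real.Gamma σ * n ^ (-σ) := by
  have h1 : ∫ δ in Ioo (0:ℝ) 1, δ ^ (σ - 1) * Real.exp (-(n * δ))
      ≤ ∫ δ in Ioi (0:ℝ), δ ^ (σ - 1) * Real.exp (-(n * δ)) := by
    refine setIntegral_mono_set (aux_int_real hσ hn) ?_
      (HasSubset.Subset.eventuallyLE Ioo_subset_Ioi_self)
    filter_upwards [ae_restrict_mem measurableSet_Ioi] with x hx
    have : (0:ℝ) < x := hx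
    positivity
  refine h1.trans_eq ?_
  rw [Real.integral_rpow_mul_exp_neg_mul_Ioi hσ hn, one_div, Real.inv_rpow hn.le,
    ← Real.rpow_neg hn.le]
  ring

/-- Under absolute convergence of the double Dirichlet series at `σ = Re s > 0`,
`∫_0^1 δ^{s-1} (Σ_{k,j≥1} b_k ξ_j a_k^j e^{-δkj}) dδ
  = Γ(s) Σ_{k,j≥1} b_k ξ_j a_k^j (kj)^{-s} − Σ_{k,j≥1} Γ(s,kj) b_k ξ_j a_k^j (kj)^{-s}`.
(The pair `p : ℕ × ℕ` encodes `k = p.1 + 1 ≥ 1`, `j = p.2 + 1 ≥ 1`.) -/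
theorem stmt_4 (b a ξ : ℕ → ℝ)
    (hb : ∀ k, 1 ≤ k → 0 ≤ b k)
    (ha : ∀ k, 1 ≤ k → 0 < a k ∧ a k ≤ 1)
    (s : ℂ) (hs : 0 < s.re)
    (habs : Summable (fun p : ℕ × ℕ =>
      b (p.1 + 1) * a (p.1 + 1) ^ (p.2 + 1) * |ξ (p.2 + 1)| *
        (((p.1 + 1) * (p.2 + 1) : ℕ) : ℝ) ^ (-s.re))) :
    ∫ δ in Set.Ioo (0 : ℝ) 1, (δ : ℂ) ^ (s - 1) *
        ((∑' p : ℕ × ℕ, b (p.1 + 1) * ξ (p.2 + 1) * a (p.1 + 1) ^ (p.2 + 1) *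
          Real.exp (-δ * (((p.1 + 1) * (p.2 + 1) : ℕ) : ℝ)) : ℝ) : ℂ)
      = Complex.Gamma s *
          ∑' p : ℕ × ℕ, ((b (p.1 + 1) * ξ (p.2 + 1) * a (p.1 + 1) ^ (p.2 + 1) : ℝ) : ℂ) *
            ((((p.1 + 1) * (p.2 + 1) : ℕ) : ℂ)) ^ (-s)
        - ∑' p : ℕ × ℕ, upperIncompleteGamma s (((p.1 + 1) * (p.2 + 1) : ℕ) : ℝ) *
            ((b (p.1 + 1) * ξ (p.2 + 1) * a (p.1 + 1) ^ (p.2 + 1) : ℝ) : ℂ) *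
            ((((p.1 + 1) * (p.2 + 1) : ℕ) : ℂ)) ^ (-s) := by
  set c : ℕ × ℕ → ℝ := fun p => b (p.1 + 1) * ξ (p.2 + 1) * a (p.1 + 1) ^ (p.2 + 1) with hc
  set N : ℕ × ℕ → ℝ := fun p => (((p.1 + 1) * (p.2 + 1) : ℕ) : ℝ) with hN
  have hNpos : ∀ p : ℕ × ℕ, 0 < N p := by
    intro p; simp only [hN]; positivity
  have habsc : ∀ p : ℕ × ℕ, |c p| = b (p.1 + 1) * a (p.1 + 1) ^ (p.2 + 1) * |ξ (p.2 + 1)| := by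
    intro p
    rw [hc]
    rw [abs_mul, abs_mul, _root_.abs_of_nonneg (hb (p.1 + 1) le_add_self),
      _root_.abs_of_nonneg (pow_nonneg (ha (p.1 + 1) le_add_self).1.le (p.2 + 1))]
    ring
  have habs' : Summable (fun p : ℕ × ℕ => |c p| * (N p) ^ (-s.re)) := by
    refine habs.congr fun p => ?_
    rw [habsc p]
  -- the complex summand and its properties
  have hS1 : Summable (fun p : ℕ × ℕ => ((c p : ℂ)) * ((N p : ℝ) : ℂ) ^ (-s)) := by
    refine Summable.of_norm (habs'.congr fun p => ?_)
    rw [norm_mul,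
      Complex.norm_cpow_eq_rpow_re_of_pos (hNpos p), Complex.norm_real, Real.norm_eq_abs, Complex.neg_re]
  have hS2 : Summable (fun p : ℕ × ℕ =>
      upperIncompleteGamma s (N p) * ((c p : ℂ)) * ((N p : ℝ) : ℂ) ^ (-s)) := by
    refine Summable.of_norm (Summable.of_nonneg_of_le (fun p => norm_nonneg _)
      (fun p => ?_) (habs'.mul_left (Real.Gamma s.re)))
    rw [norm_mul, norm_mul,
      Complex.norm_cpow_eq_rpow_re_of_pos (hNpos p), Complex.neg_re,
      Complex.norm_real (c p), Real.norm_eq_abs]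
    calc ‖upperIncompleteGamma s (N p)‖ * |c p| * N p ^ (-s.re)
        ≤ Real.Gamma s.re * |c p| * N p ^ (-s.re) := by
          have := norm_upper hs (hNpos p)
          have h1 : (0:ℝ) ≤ |c p| * N p ^ (-s.re) := by positivity
          nlinarith [norm_nonneg (upperIncompleteGamma s (N p))]
      _ = Real.Gamma s.re * (|c p| * N p ^ (-s.re)) := by ring
  -- rewrite the integrand as a tsum of complex terms
  have hint : ∀ p : ℕ × ℕ, Integrable
      (fun δ : ℝ => ((c p : ℂ)) * ((δ : ℂ) ^ (s - 1) * (Real.exp (-(N p * δ)) : ℂ)))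
      (volume.restrict (Ioo (0:ℝ) 1)) :=
    fun p => ((aux_int hs (hNpos p)).mono_set Ioo_subset_Ioi_self).const_mul _
  have hswap : ∑' p : ℕ × ℕ, (∫ δ in Ioo (0:ℝ) 1,
        ((c p : ℂ)) * ((δ : ℂ) ^ (s - 1) * (Real.exp (-(N p * δ)) : ℂ)))
      = ∫ δ in Ioo (0:ℝ) 1, ∑' p : ℕ × ℕ,
        ((c p : ℂ)) * ((δ : ℂ) ^ (s - 1) * (Real.exp (-(N p * δ)) : ℂ)) := by
    refine integral_tsum_of_summable_integral_norm hint ?_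
    refine Summable.of_nonneg_of_le
      (fun p => integral_nonneg fun δ => norm_nonneg _) (fun p => ?_)
      (habs'.mul_left (Real.Gamma s.re))
    have heq : ∫ δ in Ioo (0:ℝ) 1,
        ‖((c p : ℂ)) * ((δ : ℂ) ^ (s - 1) * (Real.exp (-(N p * δ)) : ℂ))‖
        = |c p| * ∫ δ in Ioo (0:ℝ) 1, δ ^ (s.re - 1) * Real.exp (-(N p * δ)) := by
      rw [← integral_const_mul]
      refine setIntegral_congr_fun measurableSet_Ioo fun δ hδ => ?_
      rw [norm_mul, norm_mul, Complex.norm_real (c p), Real.norm_eq_abs,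
        Complex.norm_cpow_eq_rpow_re_of_pos hδ.1,
        Complex.norm_real, Real.norm_eq_abs,
        _root_.abs_of_nonneg (Real.exp_nonneg _)]
      simp [Complex.sub_re, mul_assoc]
    rw [heq]
    calc |c p| * ∫ δ in Ioo (0:ℝ) 1, δ ^ (s.re - 1) * Real.exp (-(N p * δ))
        ≤ |c p| * (Real.Gamma s.re * N p ^ (-s.re)) := by
          refine mul_le_mul_of_nonneg_left (int_bound hs (hNpos p)) (abs_nonneg _)
      _ = Real.Gamma s.re * (|c p| * N p ^ (-s.re)) := by ring
  -- LHS
  have hLHS : ∫ δ in Set.Ioo (0 : ℝ) 1, (δ : ℂ) ^ (s - 1) *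
        ((∑' p : ℕ × ℕ, c p * Real.exp (-δ * N p) : ℝ) : ℂ)
      = ∫ δ in Ioo (0:ℝ) 1, ∑' p : ℕ × ℕ,
        ((c p : ℂ)) * ((δ : ℂ) ^ (s - 1) * (Real.exp (-(N p * δ)) : ℂ)) := by
    refine setIntegral_congr_fun measurableSet_Ioo fun δ hδ => ?_
    rw [Complex.ofReal_tsum, ← tsum_mul_left]
    refine tsum_congr fun p => ?_
    push_cast
    rw [show -(δ:ℂ) * ((N p : ℝ):ℂ) = -(((N p : ℝ):ℂ) * (δ:ℂ)) from by ring]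
    ring
  rw [hLHS, ← hswap]
  -- evaluate each integral
  have heval : ∀ p : ℕ × ℕ, (∫ δ in Ioo (0:ℝ) 1,
        ((c p : ℂ)) * ((δ : ℂ) ^ (s - 1) * (Real.exp (-(N p * δ)) : ℂ)))
      = Complex.Gamma s * (((c p : ℂ)) * ((N p : ℝ) : ℂ) ^ (-s))
        - upperIncompleteGamma s (N p) * ((c p : ℂ)) * ((N p : ℝ) : ℂ) ^ (-s) := by
    intro p
    rw [integral_const_mul, key_int hs (hNpos p)]
    ring
  rw [tsum_congr heval, Summable.tsum_sub (hS1.mul_left _) hS2, tsum_mul_left]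
  simp only [hc, hN]
  push_cast
  ring_nf
end

section
/- Let b_k ≥ 0 (k ≥ 1), 0 < a_k ≤ 1 (k ≥ 1), and ξ_j ∈ ℝ (j ≥ 1), and suppose there exist constants ρ* ∈ ℝ and M > 0 such that b_k a_k^j |ξ_j| ≤ M (kj)^{ρ*} for all k, j ≥ 1. Then for every s ∈ ℂ the double series W(s) := Σ_{k≥1} Σ_{j≥1} Γ(s, kj) b_k ξ_j a_k^j (kj)^{-s} converges absolutely, and the function s ↦ W(s) is entire (complex differentiable on all of ℂ). -/
open Real Complex

open Set MeasureTheory Filter Asymptotics Topology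

lemma pow_le_fact_mul_exp (n : ℕ) {x : ℝ} (hx : 0 ≤ x) : x ^ n ≤ (n.factorial : ℝ) * Real.exp x := by
  have h1 : x ^ n / (n.factorial : ℝ) ≤ ∑ i ∈ Finset.range (n + 1), x ^ i / (i.factorial : ℝ) := by
    refine Finset.single_le_sum (f := fun i => x ^ i / (i.factorial : ℝ)) (fun i _ => by positivity) ?_
    simp
  have h2 := Real.sum_le_exp_of_nonneg hx (n + 1)
  have h3 : x ^ n / (n.factorial : ℝ) ≤ Real.exp x := h1.trans h2
  have hn : (0:ℝ) < (n.factorial : ℝ) := by positivity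
  calc x ^ n = (x ^ n / (n.factorial : ℝ)) * (n.factorial : ℝ) := by field_simp
    _ ≤ Real.exp x * (n.factorial : ℝ) := by gcongr
    _ = (n.factorial : ℝ) * Real.exp x := by ring

lemma rpow_le_const_mul_exp (n : ℕ) {x : ℝ} (hx : 1 ≤ x) {T : ℝ} (hT : T ≤ n) {c : ℝ}
    (hc : 0 < c) : x ^ T ≤ (c⁻¹ ^ n * (n.factorial : ℝ)) * Real.exp (c * x) := by
  have hx0 : (0:ℝ) < x := lt_of_lt_of_le one_pos hx
  have h1 : x ^ T ≤ x ^ (n : ℝ) := Real.rpow_le_rpow_of_exponent_le hx hT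
  rw [Real.rpow_natCast] at h1
  have h2 : (c * x) ^ n ≤ (n.factorial : ℝ) * Real.exp (c * x) :=
    pow_le_fact_mul_exp n (by positivity)
  have h3 : x ^ n = c⁻¹ ^ n * (c * x) ^ n := by
    rw [mul_pow, ← mul_assoc, ← mul_pow, inv_mul_cancel₀ hc.ne', one_pow, one_mul]
  calc x ^ T ≤ x ^ n := h1
    _ = c⁻¹ ^ n * (c * x) ^ n := h3
    _ ≤ c⁻¹ ^ n * ((n.factorial : ℝ) * Real.exp (c * x)) := by
        have : (0:ℝ) ≤ c⁻¹ ^ n := by positivity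
        exact mul_le_mul_of_nonneg_left h2 this
    _ = (c⁻¹ ^ n * (n.factorial : ℝ)) * Real.exp (c * x) := by ring

lemma norm_integrand (s : ℂ) {x : ℝ} (hx : 0 < x) :
    ‖(x : ℂ) ^ (s - 1) * Complex.exp (-(x : ℂ))‖ = x ^ (s.re - 1) * Real.exp (-x) := by
  rw [norm_mul,
    Complex.norm_cpow_eq_rpow_re_of_pos hx, Complex.norm_exp]
  simp [Complex.sub_re]

lemma contOn_integrand (s : ℂ) (u : ℝ) (hu : 0 < u) :
    ContinuousOn (fun x : ℝ => (x : ℂ) ^ (s - 1) * Complex.exp (-(x : ℂ))) (Ioi u) := by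
  refine ContinuousOn.mul ?_ ?_
  · intro x hx
    exact (Complex.continuousAt_ofReal_cpow_const x (s - 1)
      (Or.inr (ne_of_gt (hu.trans hx)))).continuousWithinAt
  · exact (Complex.continuous_exp.comp (Complex.continuous_ofReal.neg)).continuousOn

lemma uig_norm_le (n : ℕ) {s : ℂ} (hs : s.re - 1 ≤ n) {u : ℝ} (hu : 1 ≤ u) :
    ‖upperIncompleteGamma s u‖ ≤ ((2:ℝ) ^ n * n.factorial * 2) * Real.exp (-(u / 2)) := by
  have hu0 : (0:ℝ) < u := lt_of_lt_of_le one_pos hu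
  set C : ℝ := (2:ℝ) ^ n * n.factorial with hC
  have hC0 : 0 ≤ C := by positivity
  -- integrable majorant
  have hgint : IntegrableOn (fun x : ℝ => C * Real.exp (-(1/2) * x)) (Ioi u) :=
    (exp_neg_integrableOn_Ioi u (by norm_num : (0:ℝ) < 1/2)).const_mul C
  -- pointwise bound
  have hptwise : ∀ x ∈ Ioi u, ‖(x : ℂ) ^ (s - 1) * Complex.exp (-(x : ℂ))‖
      ≤ C * Real.exp (-(1/2) * x) := by
    intro x hx
    have hx1 : (1:ℝ) ≤ x := hu.trans (le_of_lt hx)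
    have hx0 : (0:ℝ) < x := lt_of_lt_of_le one_pos hx1
    rw [norm_integrand s hx0]
    have h1 : x ^ (s.re - 1) ≤ ((2:ℝ)⁻¹⁻¹ ^ n * n.factorial) * Real.exp ((2:ℝ)⁻¹ * x) :=
      rpow_le_const_mul_exp n hx1 hs (by norm_num)
    have h2 : x ^ (s.re - 1) * Real.exp (-x)
        ≤ (((2:ℝ) ^ n * n.factorial) * Real.exp ((2:ℝ)⁻¹ * x)) * Real.exp (-x) := by
      rw [inv_inv] at h1
      exact mul_le_mul_of_nonneg_right h1 (Real.exp_pos _).le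
    refine h2.trans (le_of_eq ?_)
    rw [mul_assoc, ← Real.exp_add, show (2:ℝ)⁻¹ * x + -x = -(1/2)*x by ring]
  -- norm of integral ≤ integral of majorant
  have hbound : ‖upperIncompleteGamma s u‖ ≤ ∫ x in Ioi u, C * Real.exp (-(1/2) * x) := by
    refine MeasureTheory.norm_integral_le_of_norm_le hgint ?_
    exact (ae_restrict_mem measurableSet_Ioi).mono hptwise
  -- compute the integral
  have hFderiv : ∀ x ∈ Ici u, HasDerivAt (fun x : ℝ => -2 * Real.exp (-(1/2) * x))
      (Real.exp (-(1/2) * x)) x := by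
    intro x _
    have h := (((hasDerivAt_id x).const_mul (-(1/2) : ℝ)).exp).const_mul (-2 : ℝ)
    refine h.congr_deriv ?_
    simp only [id_eq]
    ring
  have htend : Tendsto (fun x : ℝ => -2 * Real.exp (-(1/2) * x)) atTop (𝓝 0) := by
    have : Tendsto (fun x : ℝ => Real.exp (-(1/2) * x)) atTop (𝓝 0) :=
      Real.tendsto_exp_atBot.comp (tendsto_id.const_mul_atTop_of_neg (by norm_num))
    simpa using this.const_mul (-2 : ℝ)
  have hint : (∫ x in Ioi u, Real.exp (-(1/2) * x)) = 2 * Real.exp (-(1/2) * u) := by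
    have := MeasureTheory.integral_Ioi_of_hasDerivAt_of_tendsto' hFderiv
      (exp_neg_integrableOn_Ioi u (by norm_num : (0:ℝ) < 1/2)) htend
    rw [this]; ring
  have : (∫ x in Ioi u, C * Real.exp (-(1/2) * x)) = C * 2 * Real.exp (-(u/2)) := by
    rw [MeasureTheory.integral_const_mul, hint]
    ring_nf
  rw [this] at hbound
  refine hbound.trans (le_of_eq ?_)
  ring

lemma uig_eq_mellin (u : ℝ) (hu : 0 < u) (s : ℂ) :
    upperIncompleteGamma s u
      = mellin (Set.indicator (Ioi u) (fun x : ℝ => Complex.exp (-(x : ℂ)))) s := by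
  rw [mellin]
  have h1 : ∀ x : ℝ, (x : ℂ) ^ (s - 1) •
      (Set.indicator (Ioi u) (fun x : ℝ => Complex.exp (-(x : ℂ)))) x
      = Set.indicator (Ioi u) (fun x : ℝ => (x : ℂ) ^ (s - 1) * Complex.exp (-(x : ℂ))) x := by
    intro x
    by_cases hx : x ∈ Ioi u <;> simp [hx, smul_eq_mul]
  simp_rw [h1]
  rw [MeasureTheory.setIntegral_indicator measurableSet_Ioi]
  rw [show Ioi (0:ℝ) ∩ Ioi u = Ioi u by
    rw [Set.Ioi_inter_Ioi, max_eq_right hu.le]]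
  rfl

lemma uig_differentiable {u : ℝ} (hu : 0 < u) :
    Differentiable ℂ (fun s => upperIncompleteGamma s u) := by
  set f : ℝ → ℂ := Set.indicator (Ioi u) (fun x : ℝ => Complex.exp (-(x : ℂ))) with hf
  have hfun : (fun s => upperIncompleteGamma s u) = mellin f :=
    funext fun s => uig_eq_mellin u hu s
  rw [hfun]
  intro s
  have hfint : Integrable f := by
    rw [hf, integrable_indicator_iff measurableSet_Ioi]
    refine Integrable.mono' (g := fun x : ℝ => Real.exp (-1 * x))
      ((exp_neg_integrableOn_Ioi u one_pos)) ?_ ?_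
    · exact ((Complex.continuous_exp.comp (Complex.continuous_ofReal.neg)).aestronglyMeasurable).restrict
    · refine Eventually.of_forall fun x => ?_
      rw [Complex.norm_exp]
      simp
  have hfc : LocallyIntegrableOn f (Ioi 0) :=
    hfint.locallyIntegrable.locallyIntegrableOn _
  have hnorm_le : ∀ x : ℝ, ‖f x‖ ≤ Real.exp (-x) := by
    intro x
    rw [hf]
    by_cases hx : x ∈ Ioi u
    · rw [Set.indicator_of_mem hx]
      rw [Complex.norm_exp]
      simp
    · rw [Set.indicator_of_notMem hx]
      simp [(Real.exp_pos _).le]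
  have hf_top : f =O[atTop] (fun x : ℝ => x ^ (-(s.re + 1))) := by
    rw [isBigO_iff]
    refine ⟨1, ?_⟩
    have h0 : Tendsto (fun x : ℝ => x ^ (s.re + 1) * Real.exp (-1 * x)) atTop (𝓝 0) :=
      tendsto_rpow_mul_exp_neg_mul_atTop_nhds_zero _ 1 one_pos
    filter_upwards [h0.eventually (gt_mem_nhds one_pos), eventually_ge_atTop (1:ℝ)]
      with x hx hx1
    have hx0 : (0:ℝ) < x := lt_of_lt_of_le one_pos hx1
    have hrp : (0:ℝ) < x ^ (s.re + 1) := Real.rpow_pos_of_pos hx0 _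
    have h2 : x ^ (s.re + 1) * Real.exp (-x) ≤ 1 := by
      have := hx.le; simpa using this
    have h3 : Real.exp (-x) ≤ x ^ (-(s.re + 1)) := by
      calc Real.exp (-x) = (x ^ (s.re + 1))⁻¹ * (x ^ (s.re + 1) * Real.exp (-x)) := by
            field_simp
        _ ≤ (x ^ (s.re + 1))⁻¹ * 1 := mul_le_mul_of_nonneg_left h2 (inv_nonneg.2 hrp.le)
        _ = x ^ (-(s.re + 1)) := by rw [mul_one, Real.rpow_neg hx0.le]
    calc ‖f x‖ ≤ Real.exp (-x) := hnorm_le x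
      _ ≤ x ^ (-(s.re + 1)) := h3
      _ ≤ 1 * ‖x ^ (-(s.re + 1))‖ := by
          rw [one_mul, Real.norm_eq_abs, abs_of_pos (Real.rpow_pos_of_pos hx0 _)]
  have hf_bot : f =O[𝓝[>] (0:ℝ)] (fun x : ℝ => x ^ (-(s.re - 1))) := by
    rw [isBigO_iff]
    refine ⟨0, ?_⟩
    have hIio : Iio u ∈ 𝓝[>] (0:ℝ) := nhdsWithin_le_nhds (Iio_mem_nhds hu)
    filter_upwards [hIio] with x hx
    have : f x = 0 := by
      rw [hf, Set.indicator_of_notMem]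
      exact fun hmem => absurd hx (show ¬ x < u from not_lt.2 (le_of_lt hmem))
    simp [this]
  exact mellin_differentiableAt_of_isBigO_rpow hfc hf_top (by linarith) hf_bot (by linarith)

set_option maxHeartbeats 1000000 in
lemma term_bound (b a ξ : ℕ → ℝ)
    (hb : ∀ k, 1 ≤ k → 0 ≤ b k)
    (ha : ∀ k, 1 ≤ k → 0 < a k ∧ a k ≤ 1)
    (ρstar M : ℝ) (hM : 0 < M)
    (hbound : ∀ k j : ℕ, 1 ≤ k → 1 ≤ j →
      b k * a k ^ j * |ξ j| ≤ M * ((k * j : ℕ) : ℝ) ^ ρstar)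
    (T : ℝ) (hT : 0 ≤ T) :
    ∃ u : ℕ × ℕ → ℝ, Summable u ∧ ∀ s : ℂ, |s.re| ≤ T → ∀ p : ℕ × ℕ,
      ‖upperIncompleteGamma s (((p.1 + 1) * (p.2 + 1) : ℕ) : ℝ) *
        ((b (p.1 + 1) * ξ (p.2 + 1) * a (p.1 + 1) ^ (p.2 + 1) : ℝ) : ℂ) *
        ((((p.1 + 1) * (p.2 + 1) : ℕ) : ℂ)) ^ (-s)‖ ≤ u p := by
  set n : ℕ := ⌈T⌉₊ with hn
  set n' : ℕ := ⌈ρstar + T⌉₊ with hn'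
  set C1 : ℝ := (2:ℝ) ^ n * n.factorial * 2 with hC1
  set C2 : ℝ := ((1/4:ℝ)⁻¹) ^ n' * n'.factorial with hC2
  set K : ℝ := C1 * M * C2 with hK
  have hC1pos : 0 < C1 := by rw [hC1]; positivity
  have hC2pos : 0 < C2 := by rw [hC2]; positivity
  have hKpos : 0 < K := by rw [hK]; positivity
  refine ⟨fun p => K * Real.exp (-((p.1:ℝ)+1)/8) * Real.exp (-((p.2:ℝ)+1)/8), ?_, ?_⟩
  · -- summability of the majorant
    set r : ℝ := Real.exp (-(1/8) : ℝ) with hr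
    have hr0 : 0 ≤ r := (Real.exp_pos _).le
    have hr1 : r < 1 := Real.exp_lt_one_iff.2 (by norm_num)
    have hgeom : Summable (fun k : ℕ => r ^ (k+1)) := by
      simpa only [pow_succ] using (summable_geometric_of_lt_one hr0 hr1).mul_right r
    have hexp_eq : ∀ k : ℕ, Real.exp (-((k:ℝ)+1)/8) = r ^ (k+1) := by
      intro k
      rw [hr, ← Real.exp_nat_mul]
      congr 1
      push_cast
      ring
    have h1 : Summable (fun k : ℕ => K * Real.exp (-((k:ℝ)+1)/8)) := by
      simp_rw [hexp_eq]; exact hgeom.mul_left K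
    have h2 : Summable (fun j : ℕ => Real.exp (-((j:ℝ)+1)/8)) := by
      simp_rw [hexp_eq]; exact hgeom
    exact h1.mul_of_nonneg h2 (fun k => mul_nonneg hKpos.le (Real.exp_pos _).le)
      (fun j => (Real.exp_pos _).le)
  · intro s hs p
    set k : ℕ := p.1 + 1 with hk
    set j : ℕ := p.2 + 1 with hj
    have hk1 : 1 ≤ k := Nat.le_add_left 1 p.1
    have hj1 : 1 ≤ j := Nat.le_add_left 1 p.2
    set mN : ℕ := k * j with hmN
    have hmN1 : 1 ≤ mN := Nat.one_le_iff_ne_zero.2 (by positivity)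
    set mr : ℝ := (mN : ℝ) with hmr
    have hm1 : (1:ℝ) ≤ mr := by rw [hmr]; exact_mod_cast hmN1
    have hm0 : (0:ℝ) < mr := lt_of_lt_of_le one_pos hm1
    obtain ⟨hsre', hsre⟩ := abs_le.mp hs
    -- the three factors
    have hXb : ‖upperIncompleteGamma s mr‖ ≤ C1 * Real.exp (-(mr/2)) := by
      rw [hC1]
      exact uig_norm_le n (by have := Nat.le_ceil T; rw [← hn] at this; linarith) hm1
    have hYb : ‖((b k * ξ j * a k ^ j : ℝ) : ℂ)‖ ≤ M * mr ^ ρstar := by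
      rw [Complex.norm_real, Real.norm_eq_abs]
      have habs : |b k * ξ j * a k ^ j| = b k * a k ^ j * |ξ j| := by
        rw [abs_mul, abs_mul, _root_.abs_of_nonneg (hb k hk1),
          _root_.abs_of_nonneg (pow_nonneg (ha k hk1).1.le j)]
        ring
      rw [habs]
      exact hbound k j hk1 hj1
    have hZb : ‖((mN : ℂ)) ^ (-s)‖ = mr ^ (-s.re) := by
      rw [Complex.norm_natCast_cpow_of_pos (Nat.lt_of_lt_of_le one_pos hmN1), Complex.neg_re]
    have hZb2 : mr ^ (-s.re) ≤ mr ^ T :=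
      Real.rpow_le_rpow_of_exponent_le hm1 (by linarith)
    have hrpow : mr ^ (ρstar + T) ≤ C2 * Real.exp ((1/4) * mr) := by
      rw [hC2]
      exact rpow_le_const_mul_exp n' hm1 (Nat.le_ceil _) (by norm_num)
    have hkj : ((k:ℝ) + j) ≤ 2 * mr := by
      have hnat : k + j ≤ 2 * (k * j) := by
        have h1 : k ≤ k * j := Nat.le_mul_of_pos_right k (lt_of_lt_of_le one_pos hj1)
        have h2 : j ≤ k * j := Nat.le_mul_of_pos_left j (lt_of_lt_of_le one_pos hk1)
        omega
      rw [hmr, hmN]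
      exact_mod_cast hnat
    calc ‖upperIncompleteGamma s mr * ((b k * ξ j * a k ^ j : ℝ) : ℂ) * ((mN : ℂ)) ^ (-s)‖
        = ‖upperIncompleteGamma s mr‖ * ‖((b k * ξ j * a k ^ j : ℝ) : ℂ)‖ * ‖((mN : ℂ)) ^ (-s)‖ := by
          rw [norm_mul, norm_mul]
      _ ≤ (C1 * Real.exp (-(mr/2))) * (M * mr ^ ρstar) * mr ^ T := by
          rw [hZb]
          have h01 : (0:ℝ) ≤ ‖upperIncompleteGamma s mr‖ := norm_nonneg _
          have h02 : (0:ℝ) ≤ ‖((b k * ξ j * a k ^ j : ℝ) : ℂ)‖ := norm_nonneg _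
          have h03 : (0:ℝ) ≤ mr ^ (-s.re) := Real.rpow_nonneg hm0.le _
          have hC1e : (0:ℝ) ≤ C1 * Real.exp (-(mr/2)) := by positivity
          have hMr : (0:ℝ) ≤ M * mr ^ ρstar := by
            have := Real.rpow_nonneg hm0.le ρstar; positivity
          exact mul_le_mul (mul_le_mul hXb hYb h02 hC1e) hZb2 h03 (by positivity)
      _ = (C1 * M) * (mr ^ ρstar * mr ^ T) * Real.exp (-(mr/2)) := by ring
      _ = (C1 * M) * mr ^ (ρstar + T) * Real.exp (-(mr/2)) := by
          rw [← Real.rpow_add hm0]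
      _ ≤ (C1 * M) * (C2 * Real.exp ((1/4) * mr)) * Real.exp (-(mr/2)) := by
          have : (0:ℝ) ≤ C1 * M := by positivity
          exact mul_le_mul_of_nonneg_right
            (mul_le_mul_of_nonneg_left hrpow this) (Real.exp_pos _).le
      _ = K * Real.exp (-(mr/4)) := by
          rw [show C1 * M * (C2 * Real.exp ((1/4) * mr)) * Real.exp (-(mr/2))
              = K * (Real.exp ((1/4) * mr) * Real.exp (-(mr/2))) from by rw [hK]; ring,
            ← Real.exp_add, show (1/4) * mr + -(mr/2) = -(mr/4) from by ring]
      _ ≤ K * Real.exp (-(((k:ℝ) + j)/8)) := by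
          refine mul_le_mul_of_nonneg_left (Real.exp_le_exp.2 (by linarith)) hKpos.le
      _ = K * Real.exp (-((p.1:ℝ)+1)/8) * Real.exp (-((p.2:ℝ)+1)/8) := by
          conv_rhs => rw [mul_assoc, ← Real.exp_add]
          congr 1
          push_cast [hk, hj]
          ring

/-- If `b_k a_k^j |ξ_j| ≤ M (kj)^{ρ*}` for all `k, j ≥ 1`, then
`W(s) = Σ_{k,j≥1} Γ(s, kj) b_k ξ_j a_k^j (kj)^{-s}` converges absolutely for every `s ∈ ℂ`
and `W` is an entire function. (The pair `p : ℕ × ℕ` encodes `k = p.1 + 1`, `j = p.2 + 1`.) -/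
theorem stmt_5 (b a ξ : ℕ → ℝ)
    (hb : ∀ k, 1 ≤ k → 0 ≤ b k)
    (ha : ∀ k, 1 ≤ k → 0 < a k ∧ a k ≤ 1)
    (ρstar M : ℝ) (hM : 0 < M)
    (hbound : ∀ k j : ℕ, 1 ≤ k → 1 ≤ j →
      b k * a k ^ j * |ξ j| ≤ M * ((k * j : ℕ) : ℝ) ^ ρstar) :
    (∀ s : ℂ, Summable (fun p : ℕ × ℕ =>
      ‖upperIncompleteGamma s (((p.1 + 1) * (p.2 + 1) : ℕ) : ℝ) *
        ((b (p.1 + 1) * ξ (p.2 + 1) * a (p.1 + 1) ^ (p.2 + 1) : ℝ) : ℂ) *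
        ((((p.1 + 1) * (p.2 + 1) : ℕ) : ℂ)) ^ (-s)‖)) ∧
    Differentiable ℂ (fun s : ℂ =>
      ∑' p : ℕ × ℕ, upperIncompleteGamma s (((p.1 + 1) * (p.2 + 1) : ℕ) : ℝ) *
        ((b (p.1 + 1) * ξ (p.2 + 1) * a (p.1 + 1) ^ (p.2 + 1) : ℝ) : ℂ) *
        ((((p.1 + 1) * (p.2 + 1) : ℕ) : ℂ)) ^ (-s)) := by
  have hterm_diff : ∀ p : ℕ × ℕ, Differentiable ℂ (fun s : ℂ =>
      upperIncompleteGamma s (((p.1 + 1) * (p.2 + 1) : ℕ) : ℝ) *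
        ((b (p.1 + 1) * ξ (p.2 + 1) * a (p.1 + 1) ^ (p.2 + 1) : ℝ) : ℂ) *
        ((((p.1 + 1) * (p.2 + 1) : ℕ) : ℂ)) ^ (-s)) := by
    intro p
    have hm0 : (0:ℝ) < (((p.1 + 1) * (p.2 + 1) : ℕ) : ℝ) := by positivity
    have hne : ((((p.1 + 1) * (p.2 + 1) : ℕ) : ℂ)) ≠ 0 := by
      exact Nat.cast_ne_zero.mpr (Nat.mul_ne_zero (Nat.succ_ne_zero _) (Nat.succ_ne_zero _))
    exact ((uig_differentiable hm0).mul (differentiable_const _)).mul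
      ((differentiable_id.neg).const_cpow (Or.inl hne))
  constructor
  · intro s
    obtain ⟨u, hu, hle⟩ := term_bound b a ξ hb ha ρstar M hM hbound |s.re| (abs_nonneg _)
    exact Summable.of_nonneg_of_le (fun p => norm_nonneg _) (fun p => hle s le_rfl p) hu
  · intro s₀
    obtain ⟨u, hu, hle⟩ := term_bound b a ξ hb ha ρstar M hM hbound (|s₀.re| + 1)
      (by positivity)
    set U : Set ℂ := {s : ℂ | |s.re| < |s₀.re| + 1} with hU
    have hUopen : IsOpen U :=
      isOpen_lt (_root_.continuous_abs.comp Complex.continuous_re) continuous_const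
    have hs₀ : s₀ ∈ U := by simp only [hU, Set.mem_setOf_eq]; exact lt_add_one _
    have hdiff : DifferentiableOn ℂ (fun s : ℂ =>
        ∑' p : ℕ × ℕ, upperIncompleteGamma s (((p.1 + 1) * (p.2 + 1) : ℕ) : ℝ) *
          ((b (p.1 + 1) * ξ (p.2 + 1) * a (p.1 + 1) ^ (p.2 + 1) : ℝ) : ℂ) *
          ((((p.1 + 1) * (p.2 + 1) : ℕ) : ℂ)) ^ (-s)) U := by
      refine differentiableOn_tsum_of_summable_norm hu
        (fun p => (hterm_diff p).differentiableOn) hUopen ?_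
      intro p w hw
      exact hle w (le_of_lt hw) p
    exact (hdiff.differentiableAt (hUopen.mem_nhds hs₀))
end

section
/- For every complex number s that is not an integer, Γ(s) ζ(s) ζ(s+1) = (2π)^{2s} ζ(1−s) ζ(−s) Γ(−s), where Γ is the Gamma function and ζ is the Riemann zeta function, and (2π)^{2s} is taken with the principal branch. -/
open Real Complex

/-- for every non-integer complex `s`,
`Γ(s) ζ(s) ζ(s+1) = (2π)^{2s} ζ(1−s) ζ(−s) Γ(−s)` (principal branch for `(2π)^{2s}`). -/
theorem stmt_13 (s : ℂ) (hs : ∀ n : ℤ, s ≠ (n : ℂ)) :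
    Complex.Gamma s * riemannZeta s * riemannZeta (s + 1) =
      ((2 * Real.pi : ℝ) : ℂ) ^ (2 * s) * riemannZeta (1 - s) * riemannZeta (-s) *
        Complex.Gamma (-s) := by
  have hπ : (π : ℂ) ≠ 0 := Complex.ofReal_ne_zero.mpr Real.pi_ne_zero
  have hw : (2 * (π : ℂ)) ≠ 0 := by simp [hπ]
  have hs0 : s ≠ 0 := by simpa using hs 0
  have hsn : -s ≠ 0 := neg_ne_zero.mpr hs0
  have h1 : riemannZeta (1 - s) =
      2 * (2 * (π : ℂ)) ^ (-s) * Complex.Gamma s * Complex.cos (π * s / 2) * riemannZeta s :=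
    riemannZeta_one_sub (fun n => by simpa using hs (-n)) (by simpa using hs 1)
  have h2 : riemannZeta (-s) =
      2 * (2 * (π : ℂ)) ^ (-(s + 1)) * Complex.Gamma (s + 1) *
        Complex.cos (π * (s + 1) / 2) * riemannZeta (s + 1) := by
    have := riemannZeta_one_sub (s := s + 1)
      (fun n => by
        intro h
        exact hs (-(n : ℤ) - 1) (by push_cast; linear_combination h))
      (by intro h; exact hs 0 (by push_cast; linear_combination h))
    simpa [show (1 : ℂ) - (s + 1) = -s by ring] using this
  have hΓ1 : Complex.Gamma (s + 1) = s * Complex.Gamma s := Complex.Gamma_add_one s hs0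
  have hΓ3 : Complex.Gamma (1 - s) = -s * Complex.Gamma (-s) := by
    have := Complex.Gamma_add_one (-s) hsn
    rw [show (1 : ℂ) - s = -s + 1 by ring, this]
  have hcos : Complex.cos (π * (s + 1) / 2) = -Complex.sin (π * s / 2) := by
    rw [show (π : ℂ) * (s + 1) / 2 = π * s / 2 + π / 2 by ring]
    simpa using Complex.cos_add_pi_div_two (π * s / 2)
  have hsin2 : Complex.sin (π * s) =
      2 * Complex.sin (π * s / 2) * Complex.cos (π * s / 2) := by
    rw [← Complex.sin_two_mul]; congr 1; ring
  have hsinne : Complex.sin (π * s) ≠ 0 := by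
    intro h
    rw [Complex.sin_eq_zero_iff] at h
    obtain ⟨k, hk⟩ := h
    refine hs k (mul_left_cancel₀ hπ ?_)
    rw [hk]; ring
  have hkey : s * Complex.Gamma s * Complex.Gamma (-s) * Complex.sin (π * s) = -π := by
    have h := Complex.Gamma_mul_Gamma_one_sub s
    rw [hΓ3, eq_div_iff hsinne] at h
    linear_combination -h
  rw [hsin2] at hkey
  have hpow : ((2 * Real.pi : ℝ) : ℂ) ^ (2 * s) * ((2 * (π : ℂ)) ^ (-s) *
      (2 * (π : ℂ)) ^ (-(s + 1))) * (2 * (π : ℂ)) = 1 := by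
    push_cast
    rw [← Complex.cpow_add _ _ hw, ← Complex.cpow_add _ _ hw,
      show 2 * s + (-s + -(s + 1)) = -1 by ring, Complex.cpow_neg_one,
      inv_mul_cancel₀ hw]
  rw [h1, h2, hΓ1, hcos]
  linear_combination (-(Complex.Gamma s * riemannZeta s * riemannZeta (s + 1))) * hpow +
    (2 * ((2 * Real.pi : ℝ) : ℂ) ^ (2 * s) * (2 * (π : ℂ)) ^ (-s) *
      (2 * (π : ℂ)) ^ (-(s + 1)) * Complex.Gamma s * riemannZeta s * riemannZeta (s + 1)) * hkey
end

section
/- Let g be a formal power series over ℝ with constant coefficient 0. Then all coefficients of the formal power series exp(b·g) are nonnegative for every real b ≥ 0 if and only if all coefficients of g are nonnegative. -/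
open PowerSeries Finset Filter Topology

lemma pow_coeff_nonneg {g : PowerSeries ℝ} (hg : ∀ n, 0 ≤ PowerSeries.coeff n g) :
    ∀ m n, 0 ≤ PowerSeries.coeff n (g ^ m) := by
  intro m
  induction m with
  | zero =>
    intro n
    rw [pow_zero, PowerSeries.coeff_one]
    split_ifs <;> norm_num
  | succ m ih =>
    intro n
    rw [pow_succ, PowerSeries.coeff_mul]
    exact Finset.sum_nonneg fun p _ => mul_nonneg (ih p.1) (hg p.2)

/-- Formal exponential of a power series with zero constant coefficient: since `g` has zero
constant term, `g^m` has order at least `m`, so the coefficient of `X^n` in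
`exp(g) = Σ_m g^m/m!` is the finite sum `Σ_{m=0}^n (coeff n (g^m))/m!`. -/
noncomputable def psExp (g : PowerSeries ℝ) : PowerSeries ℝ :=
  PowerSeries.mk fun n =>
    ∑ m ∈ Finset.range (n + 1), (PowerSeries.coeff n (g ^ m)) / (m.factorial : ℝ)

/-- for a formal power series `g` over `ℝ` with zero constant coefficient,
all coefficients of `exp(b·g)` are nonnegative for every `b ≥ 0` iff all coefficients of
`g` are nonnegative. -/
theorem stmt_16 (g : PowerSeries ℝ) (hg : PowerSeries.constantCoeff g = 0) :
    (∀ b : ℝ, 0 ≤ b → ∀ n : ℕ, 0 ≤ PowerSeries.coeff n (psExp (b • g))) ↔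
      (∀ n : ℕ, 0 ≤ PowerSeries.coeff n g) := by
  constructor
  · intro h n
    rcases Nat.eq_zero_or_pos n with rfl | hn
    · rw [PowerSeries.coeff_zero_eq_constantCoeff, hg]
    · set c : ℕ → ℝ := fun m => PowerSeries.coeff n (g ^ m) with hcdef
      set f : ℝ → ℝ := fun b => ∑ m ∈ range n, b ^ m * (c (m + 1) / ((m + 1).factorial : ℝ))
        with hf
      have hc : ∀ (b : ℝ) m, PowerSeries.coeff n ((b • g) ^ m) = b ^ m * c m := by
        intro b m
        rw [smul_pow, map_smul, smul_eq_mul]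
      have key : ∀ b : ℝ, PowerSeries.coeff n (psExp (b • g)) = b * f b := by
        intro b
        simp only [psExp, coeff_mk, hc, mul_div_assoc]
        rw [Finset.sum_range_succ']
        have h0 : c 0 = 0 := by
          simp [hcdef, PowerSeries.coeff_one, hn.ne']
        rw [h0]
        simp only [mul_zero, zero_div, add_zero, hf, Finset.mul_sum]
        apply Finset.sum_congr rfl
        intro m _
        rw [pow_succ']
        ring
      have hfpos : ∀ b : ℝ, 0 < b → 0 ≤ f b := by
        intro b hb
        have h1 := h b hb.le n
        rw [key] at h1
        nlinarith [h1]
      have hcont : Continuous f :=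
        continuous_finset_sum _ fun i _ => (continuous_pow i).mul continuous_const
      have hf0 : f 0 = PowerSeries.coeff n g := by
        simp only [hf]
        rw [Finset.sum_eq_single 0]
        · simp [hcdef, pow_one]
        · intro m _ hm
          simp [zero_pow hm]
        · intro habs
          exact absurd (Finset.mem_range.mpr hn) habs
      have hlim : Tendsto f (𝓝[>] (0 : ℝ)) (𝓝 (f 0)) :=
        (hcont.tendsto 0).mono_left nhdsWithin_le_nhds
      have : (0 : ℝ) ≤ f 0 :=
        ge_of_tendsto hlim (eventually_nhdsWithin_of_forall fun b hb => hfpos b hb)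
      rwa [hf0] at this
  · intro h b hb n
    simp only [psExp, coeff_mk]
    apply Finset.sum_nonneg
    intro m _
    rw [smul_pow, map_smul, smul_eq_mul]
    have := pow_coeff_nonneg h m n
    positivity
end

section
/- For every real ε with 0 < ε < 1, the limit lim_{s → 0⁺} s · ∫_2^∞ x^{-s-1} (log x)^{-ε} dx = 0 holds (s real, s > 0). -/
open Real Filter Topology MeasureTheory Set

private lemma stmt19_contOn (s ε : ℝ) :
    ContinuousOn (fun x : ℝ => x ^ (-s - 1) * Real.log x ^ (-ε)) (Set.Ioi 2) := by
  intro x hx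
  have hx2 : (2:ℝ) < x := hx
  have hx0 : (0:ℝ) < x := by linarith
  have h1 : ContinuousAt (fun x : ℝ => x ^ (-s - 1)) x :=
    Real.continuousAt_rpow_const x _ (Or.inl hx0.ne')
  have h2 : ContinuousAt (fun x : ℝ => Real.log x ^ (-ε)) x := by
    have hlog : (0:ℝ) < Real.log x := Real.log_pos (by linarith)
    exact (Real.continuousAt_rpow_const _ _ (Or.inl hlog.ne')).comp
      (Real.continuousAt_log hx0.ne')
  exact (h1.mul h2).continuousWithinAt

private lemma stmt19_integrable (s ε : ℝ) (hs0 : 0 < s) (hε0 : 0 < ε) :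
    IntegrableOn (fun x : ℝ => x ^ (-s - 1) * Real.log x ^ (-ε)) (Set.Ioi 2) := by
  have hg : IntegrableOn (fun x : ℝ => Real.log 2 ^ (-ε) * x ^ (-s - 1)) (Set.Ioi 2) :=
    (integrableOn_Ioi_rpow_of_lt (by linarith) (by norm_num : (0:ℝ) < 2)).const_mul _
  refine hg.integrable.mono' ((stmt19_contOn s ε).aestronglyMeasurable measurableSet_Ioi) ?_
  rw [ae_restrict_iff' measurableSet_Ioi]
  filter_upwards with x hx
  have hx2 : (2:ℝ) < x := hx
  have hx0 : (0:ℝ) < x := by linarith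
  have hlog2 : (0:ℝ) < Real.log 2 := Real.log_pos (by norm_num)
  have hlogx : Real.log 2 ≤ Real.log x := Real.log_le_log (by norm_num) hx2.le
  have h1 : Real.log x ^ (-ε) ≤ Real.log 2 ^ (-ε) :=
    Real.rpow_le_rpow_of_nonpos hlog2 hlogx (by linarith)
  have hfnn : 0 ≤ x ^ (-s - 1) * Real.log x ^ (-ε) :=
    mul_nonneg (Real.rpow_nonneg hx0.le _) (Real.rpow_nonneg (by linarith) _)
  rw [Real.norm_of_nonneg hfnn, mul_comm (Real.log 2 ^ (-ε))]
  exact mul_le_mul_of_nonneg_left h1 (Real.rpow_nonneg hx0.le _)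

private lemma stmt19_bound (ε : ℝ) (hε0 : 0 < ε) (hε1 : ε < 1) {s : ℝ}
    (hs0 : 0 < s) (hs1 : s < 1) :
    s * ∫ x in Set.Ioi (2 : ℝ), x ^ (-s - 1) * Real.log x ^ (-ε)
      ≤ Real.log 2 ^ (-ε) * s ^ (1/2 : ℝ) + s ^ (ε/2) := by
  set t : ℝ := s ^ (-(1/2) : ℝ) with ht
  have ht1 : 1 < t := by
    rw [ht, Real.one_lt_rpow_iff_of_pos hs0]
    right; exact ⟨hs1, by norm_num⟩
  set A : ℝ := Real.exp t with hA
  have hA2 : (2:ℝ) ≤ A := by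
    have h1 : (2:ℝ) ≤ Real.exp 1 := by
      have := Real.add_one_le_exp (1:ℝ); linarith
    exact h1.trans (Real.exp_le_exp.2 ht1.le)
  have hA0 : (0:ℝ) < A := by linarith
  have hlogA : Real.log A = t := Real.log_exp t
  have hlog2 : (0:ℝ) < Real.log 2 := Real.log_pos (by norm_num)
  set f : ℝ → ℝ := fun x => x ^ (-s - 1) * Real.log x ^ (-ε) with hf
  have hint : IntegrableOn f (Set.Ioi 2) := stmt19_integrable s ε hs0 hε0
  have hint1 : IntegrableOn f (Set.Ioc 2 A) := hint.mono_set Set.Ioc_subset_Ioi_self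
  have hint2 : IntegrableOn f (Set.Ioi A) := hint.mono_set (Set.Ioi_subset_Ioi hA2)
  have hsplit : ∫ x in Set.Ioi (2:ℝ), f x
      = (∫ x in Set.Ioc (2:ℝ) A, f x) + ∫ x in Set.Ioi A, f x := by
    rw [← MeasureTheory.setIntegral_union (Set.Ioc_disjoint_Ioi le_rfl)
      measurableSet_Ioi hint1 hint2, Set.Ioc_union_Ioi_eq_Ioi hA2]
  -- piece 1
  have hinv : IntegrableOn (fun x : ℝ => Real.log 2 ^ (-ε) * x⁻¹) (Set.Ioc 2 A) := by
    have : IntervalIntegrable (fun x : ℝ => x⁻¹) volume 2 A := by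
      apply intervalIntegral.intervalIntegrable_inv
      · intro x hx
        have := hx.1
        rw [min_eq_left hA2] at this
        linarith
      · exact continuousOn_id
    exact this.1.const_mul _
  have h1 : (∫ x in Set.Ioc (2:ℝ) A, f x)
      ≤ ∫ x in Set.Ioc (2:ℝ) A, Real.log 2 ^ (-ε) * x⁻¹ := by
    refine MeasureTheory.setIntegral_mono_on hint1 hinv measurableSet_Ioc ?_
    intro x hx
    have hx2 : (2:ℝ) < x := hx.1
    have hx0 : (0:ℝ) < x := by linarith
    have ha : x ^ (-s - 1) ≤ x⁻¹ := by
      rw [← Real.rpow_neg_one x]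
      exact Real.rpow_le_rpow_of_exponent_le (by linarith) (by linarith)
    have hb : Real.log x ^ (-ε) ≤ Real.log 2 ^ (-ε) :=
      Real.rpow_le_rpow_of_nonpos hlog2 (Real.log_le_log (by norm_num) hx2.le)
        (by linarith)
    calc x ^ (-s - 1) * Real.log x ^ (-ε)
        ≤ x⁻¹ * Real.log 2 ^ (-ε) :=
          mul_le_mul ha hb (Real.rpow_nonneg (Real.log_nonneg (by linarith)) _)
            (inv_nonneg.2 hx0.le)
      _ = Real.log 2 ^ (-ε) * x⁻¹ := mul_comm _ _
  have hval1 : (∫ x in Set.Ioc (2:ℝ) A, Real.log 2 ^ (-ε) * x⁻¹)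
      = Real.log 2 ^ (-ε) * (Real.log A - Real.log 2) := by
    rw [MeasureTheory.integral_const_mul]
    congr 1
    rw [← intervalIntegral.integral_of_le hA2, integral_inv, Real.log_div hA0.ne' (by norm_num)]
    intro h
    have h1 := h.1
    rw [min_eq_left hA2] at h1
    linarith
  -- piece 2
  have hrint : IntegrableOn (fun x : ℝ => t ^ (-ε) * x ^ (-s - 1)) (Set.Ioi A) :=
    (integrableOn_Ioi_rpow_of_lt (by linarith) hA0).const_mul _
  have h2 : (∫ x in Set.Ioi A, f x) ≤ ∫ x in Set.Ioi A, t ^ (-ε) * x ^ (-s - 1) := by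
    refine MeasureTheory.setIntegral_mono_on hint2 hrint measurableSet_Ioi ?_
    intro x hx
    have hxA : A < x := hx
    have hx0 : (0:ℝ) < x := by linarith
    have hb : Real.log x ^ (-ε) ≤ t ^ (-ε) := by
      rw [← hlogA]
      exact Real.rpow_le_rpow_of_nonpos (by rw [hlogA]; linarith)
        (Real.log_le_log hA0 hxA.le) (by linarith)
    calc x ^ (-s - 1) * Real.log x ^ (-ε)
        ≤ x ^ (-s - 1) * t ^ (-ε) :=
          mul_le_mul_of_nonneg_left hb (Real.rpow_nonneg hx0.le _)
      _ = t ^ (-ε) * x ^ (-s - 1) := mul_comm _ _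
  have hval2 : (∫ x in Set.Ioi A, t ^ (-ε) * x ^ (-s - 1))
      = t ^ (-ε) * (A ^ (-s) / s) := by
    rw [MeasureTheory.integral_const_mul, integral_Ioi_rpow_of_lt (by linarith) hA0]
    congr 1
    have : (-s - 1) + 1 = -s := by ring
    rw [this]
    field_simp
  -- combine
  have hIle : (∫ x in Set.Ioi (2:ℝ), f x)
      ≤ Real.log 2 ^ (-ε) * (Real.log A - Real.log 2) + t ^ (-ε) * (A ^ (-s) / s) := by
    rw [hsplit]
    exact add_le_add (h1.trans_eq hval1) (h2.trans_eq hval2)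
  have hst : s * t = s ^ (1/2 : ℝ) := by
    rw [ht]
    nth_rewrite 1 [← Real.rpow_one s]
    rw [← Real.rpow_add hs0]
    norm_num
  have hte : t ^ (-ε) = s ^ (ε/2) := by
    rw [ht, ← Real.rpow_mul hs0.le]
    congr 1
    ring
  have hAs : A ^ (-s) ≤ 1 :=
    Real.rpow_le_one_of_one_le_of_nonpos (by linarith) (by linarith)
  have htpos : (0:ℝ) < t ^ (-ε) := Real.rpow_pos_of_pos (by linarith) _
  calc s * ∫ x in Set.Ioi (2:ℝ), f x
      ≤ s * (Real.log 2 ^ (-ε) * (Real.log A - Real.log 2) + t ^ (-ε) * (A ^ (-s) / s)) :=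
        mul_le_mul_of_nonneg_left hIle hs0.le
    _ = Real.log 2 ^ (-ε) * (s * (Real.log A - Real.log 2)) + t ^ (-ε) * A ^ (-s) := by
        field_simp
    _ ≤ Real.log 2 ^ (-ε) * (s * t) + t ^ (-ε) * 1 := by
        refine add_le_add (mul_le_mul_of_nonneg_left ?_ (Real.rpow_nonneg hlog2.le _))
          (mul_le_mul_of_nonneg_left hAs htpos.le)
        refine mul_le_mul_of_nonneg_left ?_ hs0.le
        rw [hlogA]; linarith
    _ = Real.log 2 ^ (-ε) * s ^ (1/2 : ℝ) + s ^ (ε/2) := by rw [hst, mul_one, hte]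

/-- for `0 < ε < 1`, `lim_{s → 0⁺} s ∫_2^∞ x^{-s-1} (log x)^{-ε} dx = 0`. -/
theorem stmt_19 (ε : ℝ) (hε0 : 0 < ε) (hε1 : ε < 1) :
    Tendsto (fun s : ℝ =>
        s * ∫ x in Set.Ioi (2 : ℝ), x ^ (-s - 1) * (Real.log x) ^ (-ε))
      (nhdsWithin 0 (Set.Ioi 0)) (nhds 0) := by
  have hmem : Set.Ioo (0:ℝ) 1 ∈ nhdsWithin (0:ℝ) (Set.Ioi 0) := by
    rw [mem_nhdsWithin]
    exact ⟨Set.Iio 1, isOpen_Iio, by norm_num, by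
      rintro x ⟨hx1, hx2⟩; exact ⟨hx2, hx1⟩⟩
  have hpow : ∀ c : ℝ, 0 < c →
      Tendsto (fun s : ℝ => s ^ c) (nhdsWithin 0 (Set.Ioi 0)) (nhds 0) := by
    intro c hc
    have : Tendsto (fun s : ℝ => s ^ c) (nhds 0) (nhds ((0:ℝ) ^ c)) :=
      (Real.continuousAt_rpow_const 0 c (Or.inr hc.le)).tendsto
    rw [Real.zero_rpow hc.ne'] at this
    exact this.mono_left nhdsWithin_le_nhds
  have hupper : Tendsto (fun s : ℝ => Real.log 2 ^ (-ε) * s ^ (1/2 : ℝ) + s ^ (ε/2))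
      (nhdsWithin 0 (Set.Ioi 0)) (nhds 0) := by
    have h1 := (hpow (1/2) (by norm_num)).const_mul (Real.log 2 ^ (-ε))
    have h2 := hpow (ε/2) (by linarith)
    simpa using h1.add h2
  refine tendsto_of_tendsto_of_tendsto_of_le_of_le' tendsto_const_nhds hupper ?_ ?_
  · filter_upwards [hmem] with s hs
    refine mul_nonneg hs.1.le (MeasureTheory.setIntegral_nonneg measurableSet_Ioi ?_)
    intro x hx
    have hx0 : (0:ℝ) < x := lt_trans (by norm_num) hx
    exact mul_nonneg (Real.rpow_nonneg hx0.le _)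
      (Real.rpow_nonneg (Real.log_nonneg (by linarith [Set.mem_Ioi.1 hx])) _)
  · filter_upwards [hmem] with s hs
    exact stmt19_bound ε hε0 hε1 hs.1 hs.2
end
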